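/- arXiv:1903.09877 — 6 statements merged into one kernel-verified Lean document; each statement's English description precedes it below -/
import Mathlib

section
/- Fix an integer b ≥ 2 and let x, y ∈ [0,1). Let i ∈ ℕ and set h_i = ⌊b^i·min(x,y)⌋·b^{-i} and h_{i+1} = ⌊b^{i+1}·min(x,y)⌋·b^{-i-1}. Then V_i(x,y) = (b−1)·min(x,y)/b^{i+1} if γ_b(x,y) < i; V_i(x,y) = x·y − h_i·(x + y − h_i − b^{-i}) − min(x,y)/b^{i+1} if γ_b(x,y) = i; and V_i(x,y) = h_{i+1}·(x + y − h_{i+1} − b^{-i-1}) − h_i·(x + y − h_i − b^{-i}) if γ_b(x,y) > i (where γ_b(x,x) = ∞ is regarded as > i). -/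
open MeasureTheory
open scoped Classical

noncomputable def gammaB (b : ℕ) (x y : ℝ) : ℕ∞ :=
  if x = y then ⊤
  else (↑(sInf {i : ℕ | ⌊(b : ℝ) ^ i * x⌋ = ⌊(b : ℝ) ^ i * y⌋ ∧
      ⌊(b : ℝ) ^ (i + 1) * x⌋ ≠ ⌊(b : ℝ) ^ (i + 1) * y⌋}) : ℕ∞)

def Dset (b : ℕ) (i : ℕ) : Set (ℝ × ℝ) :=
  {p | p.1 ∈ Set.Ico (0 : ℝ) 1 ∧ p.2 ∈ Set.Ico (0 : ℝ) 1 ∧ gammaB b p.1 p.2 = (i : ℕ∞)}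

noncomputable def Vi (b : ℕ) (i : ℕ) (x y : ℝ) : ℝ :=
  (volume ((Set.Ico (0 : ℝ) x ×ˢ Set.Ico (0 : ℝ) y) ∩ Dset b i)).toReal

/-!
Write `A_j = agreeSet (b ^ j)` for the set of pairs whose first `j` base-`b` digits agree. On
`[0,1)²` one has `j ≤ γ_b(u,v) ↔ (u,v) ∈ A_j`, and the `A_j` decrease, so `D_i = A_i \ A_{i+1}` and
`V_i = W_i - W_{i+1}` with `W_j(x,y)` the area of `[0,x) × [0,y) ∩ A_j`. The set `A_j` is the union
of the diagonal squares of the grid of mesh `b^{-j}`; the rectangle contains `⌊b^j min(x,y)⌋` of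
them fully and cuts one more, which gives `W_j = xy - h_j (x + y - h_j - b^{-j})` when `x` and `y`
share their first `j` digits and `W_j = min(x,y) / b^j` otherwise.
-/

open Set Function

section AgreeSet

variable {c x y u v : ℝ}

def agreeSet (c : ℝ) : Set (ℝ × ℝ) :=
  {p | ⌊c * p.1⌋ = ⌊c * p.2⌋}

lemma measurableSet_agreeSet (c : ℝ) : MeasurableSet (agreeSet c) :=
  measurableSet_eq_fun (Int.measurable_floor.comp (measurable_fst.const_mul c))
    (Int.measurable_floor.comp (measurable_snd.const_mul c))

lemma agreeSet_natCast_mul_subset (c : ℝ) {n : ℕ} (hn : n ≠ 0) :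
    agreeSet (n * c) ⊆ agreeSet c := by
  intro p hp
  have hdiv : ∀ t : ℝ, ⌊c * t⌋ = ⌊n * c * t⌋ / n := fun t => by
    rw [← Int.floor_div_natCast, mul_assoc, mul_div_cancel_left₀ _ (Nat.cast_ne_zero.mpr hn)]
  simp only [agreeSet, mem_ofPred_eq] at hp ⊢
  rw [hdiv, hdiv, hp]

lemma antitone_agreeSet_pow {b : ℕ} (hb : b ≠ 0) :
    Antitone fun j : ℕ => agreeSet ((b : ℝ) ^ j) :=
  antitone_nat_of_succ_le fun j => by
    simpa only [pow_succ'] using agreeSet_natCast_mul_subset ((b : ℝ) ^ j) hb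

lemma mem_agreeSet_iff (hc : 0 ≤ c) (hu : 0 ≤ u) (hv : 0 ≤ v) :
    (u, v) ∈ agreeSet c ↔ ⌊c * u⌋₊ = ⌊c * v⌋₊ := by
  rw [agreeSet, mem_ofPred_eq, ← Int.natCast_floor_eq_floor (by positivity),
    ← Int.natCast_floor_eq_floor (by positivity), Nat.cast_inj]

def cell (c : ℝ) (k : ℕ) : Set ℝ :=
  Ico (k / c) ((k + 1) / c)

lemma mem_cell_iff (hc : 0 < c) (hu : 0 ≤ u) {k : ℕ} : u ∈ cell c k ↔ ⌊c * u⌋₊ = k := by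
  rw [Nat.floor_eq_iff (by positivity), cell, mem_Ico, div_le_iff₀' hc, lt_div_iff₀' hc]

lemma cell_nonneg (hc : 0 < c) {k : ℕ} (hu : u ∈ cell c k) : 0 ≤ u :=
  le_trans (by positivity) hu.1

lemma pairwise_disjoint_cell (hc : 0 < c) : Pairwise (Disjoint on (cell c)) := by
  intro k l hkl
  refine Set.disjoint_left.mpr fun u huk hul => hkl ?_
  have hu := cell_nonneg hc huk
  rw [← (mem_cell_iff hc hu).mp huk, (mem_cell_iff hc hu).mp hul]

lemma Ico_zero_inter_cell (hc : 0 < c) (k : ℕ) :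
    Ico 0 x ∩ cell c k = Ico (k / c) (min x ((k + 1) / c)) := by
  rw [cell, Ico_inter_Ico, max_eq_right (by positivity)]

lemma rect_inter_agreeSet_eq_biUnion (hc : 0 < c) :
    Ico 0 x ×ˢ Ico 0 y ∩ agreeSet c =
      ⋃ k ∈ Finset.range (⌊c * min x y⌋₊ + 1),
        (Ico 0 x ∩ cell c k) ×ˢ (Ico 0 y ∩ cell c k) := by
  ext ⟨u, v⟩
  simp only [mem_inter_iff, mem_prod, mem_iUnion, Finset.mem_range, Nat.lt_succ_iff, exists_prop]
  constructor
  · rintro ⟨⟨⟨hu, hux⟩, ⟨hv, hvy⟩⟩, hagree⟩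
    have huv := (mem_agreeSet_iff hc.le hu hv).mp hagree
    refine ⟨⌊c * u⌋₊, ?_, ⟨⟨hu, hux⟩, (mem_cell_iff hc hu).mpr rfl⟩,
      ⟨⟨hv, hvy⟩, (mem_cell_iff hc hv).mpr huv.symm⟩⟩
    rw [Nat.le_floor_iff (mul_nonneg hc.le (le_min (by linarith) (by linarith))),
      mul_min_of_nonneg _ _ hc.le]
    have hux' : (⌊c * u⌋₊ : ℝ) ≤ c * x :=
      (Nat.floor_le (by positivity)).trans (mul_le_mul_of_nonneg_left hux.le hc.le)
    have hvy' : (⌊c * v⌋₊ : ℝ) ≤ c * y :=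
      (Nat.floor_le (by positivity)).trans (mul_le_mul_of_nonneg_left hvy.le hc.le)
    exact le_min hux' (huv ▸ hvy')
  · rintro ⟨k, -, ⟨hux, huk⟩, ⟨hvy, hvk⟩⟩
    refine ⟨⟨hux, hvy⟩, (mem_agreeSet_iff hc.le hux.1 hvy.1).mpr ?_⟩
    rw [(mem_cell_iff hc hux.1).mp huk, (mem_cell_iff hc hvy.1).mp hvk]

lemma volume_real_prod (s t : Set ℝ) :
    volume.real (s ×ˢ t) = volume.real s * volume.real t := by
  rw [measureReal_def, Measure.volume_eq_prod, Measure.prod_prod, ENNReal.toReal_mul]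
  rfl

lemma volume_real_rect_inter_agreeSet (hc : 0 < c) (hx : 0 ≤ x) (hy : 0 ≤ y) :
    volume.real (Ico 0 x ×ˢ Ico 0 y ∩ agreeSet c) =
      ⌊c * min x y⌋₊ / c ^ 2 +
        (min x ((⌊c * min x y⌋₊ + 1) / c) - ⌊c * min x y⌋₊ / c) *
          (min y ((⌊c * min x y⌋₊ + 1) / c) - ⌊c * min x y⌋₊ / c) := by
  set K := ⌊c * min x y⌋₊
  have hK : (K : ℝ) / c ≤ min x y := by
    rw [div_le_iff₀' hc]; exact Nat.floor_le (by positivity)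
  have hside : ∀ {z : ℝ} {k : ℕ}, min x y ≤ z → k ≤ K →
      volume.real (Ico 0 z ∩ cell c k) = min z ((k + 1) / c) - k / c := fun hz hk => by
    rw [Ico_zero_inter_cell hc, Real.volume_real_Ico_of_le]
    refine le_min (le_trans ?_ (hK.trans hz)) (div_le_div_of_nonneg_right (by linarith) hc.le)
    exact div_le_div_of_nonneg_right (by exact_mod_cast hk) hc.le
  have hdisj : PairwiseDisjoint (↑(Finset.range (K + 1)))
      fun k : ℕ => (Ico 0 x ∩ cell c k) ×ˢ (Ico 0 y ∩ cell c k) := fun k _ l _ hkl =>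
    Set.disjoint_prod.mpr (Or.inl ((pairwise_disjoint_cell hc hkl).mono inter_subset_right
      inter_subset_right))
  rw [rect_inter_agreeSet_eq_biUnion hc, measureReal_biUnion_finset hdisj
    (fun k _ => (measurableSet_Ico.inter measurableSet_Ico).prod
      (measurableSet_Ico.inter measurableSet_Ico))
    (fun k _ => (((Metric.isBounded_Ico 0 x).subset inter_subset_left).prod
      ((Metric.isBounded_Ico 0 y).subset inter_subset_left)).measure_lt_top.ne),
    Finset.sum_range_succ, volume_real_prod, hside (min_le_left x y) le_rfl,
    hside (min_le_right x y) le_rfl]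
  congr 1
  have hfull : ∀ k ∈ Finset.range K,
      volume.real ((Ico 0 x ∩ cell c k) ×ˢ (Ico 0 y ∩ cell c k)) = 1 / c ^ 2 := fun k hk => by
    have hkK := Finset.mem_range.mp hk
    have hk1 : (k + 1 : ℝ) / c ≤ min x y :=
      le_trans (div_le_div_of_nonneg_right (by exact_mod_cast hkK) hc.le) hK
    rw [volume_real_prod, hside (min_le_left x y) hkK.le, hside (min_le_right x y) hkK.le,
      min_eq_right (hk1.trans (min_le_left x y)), min_eq_right (hk1.trans (min_le_right x y))]
    field_simp
    ring
  rw [Finset.sum_congr rfl hfull, Finset.sum_const, Finset.card_range, nsmul_eq_mul]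
  ring

lemma volume_real_rect_inter_agreeSet_of_mem (hc : 0 < c) (hx : 0 ≤ x) (hy : 0 ≤ y)
    (hxy : (x, y) ∈ agreeSet c) :
    volume.real (Ico 0 x ×ˢ Ico 0 y ∩ agreeSet c) =
      x * y - (⌊c * min x y⌋ / c) * (x + y - ⌊c * min x y⌋ / c - 1 / c) := by
  have hK : ⌊c * min x y⌋₊ = ⌊c * x⌋₊ := by
    rcases min_choice x y with h | h <;> rw [h]
    exact ((mem_agreeSet_iff hc.le hx hy).mp hxy).symm
  have hlt : ∀ {z : ℝ}, ⌊c * z⌋₊ = ⌊c * x⌋₊ → z < (⌊c * x⌋₊ + 1) / c := fun h => by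
    rw [lt_div_iff₀' hc, ← h]; exact Nat.lt_floor_add_one _
  rw [volume_real_rect_inter_agreeSet hc hx hy, ← natCast_floor_eq_intCast_floor (by positivity),
    hK, min_eq_left (hlt rfl).le,
    min_eq_left (hlt ((mem_agreeSet_iff hc.le hx hy).mp hxy).symm).le]
  field_simp
  ring

lemma volume_real_rect_inter_agreeSet_of_notMem (hc : 0 < c) (hx : 0 ≤ x) (hy : 0 ≤ y)
    (hxy : (x, y) ∉ agreeSet c) :
    volume.real (Ico 0 x ×ˢ Ico 0 y ∩ agreeSet c) = min x y / c := by
  wlog hle : x ≤ y generalizing x y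
  · have hswap : (y, x) ∉ agreeSet c := fun h => hxy (Eq.symm h)
    rw [volume_real_rect_inter_agreeSet hc hx hy, min_comm x y,
      ← this hy hx hswap (le_of_not_ge hle), volume_real_rect_inter_agreeSet hc hy hx]
    ring
  have hxlt : x < (⌊c * x⌋₊ + 1) / c := by rw [lt_div_iff₀' hc]; exact Nat.lt_floor_add_one _
  have hylt : (⌊c * x⌋₊ + 1) / c ≤ y := by
    have hfloor : ⌊c * x⌋₊ < ⌊c * y⌋₊ :=
      (Nat.floor_mono (mul_le_mul_of_nonneg_left hle hc.le)).lt_of_ne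
        (fun h => hxy ((mem_agreeSet_iff hc.le hx hy).mpr h))
    rw [div_le_iff₀' hc]
    exact le_trans (by exact_mod_cast hfloor) (Nat.floor_le (by positivity))
  rw [volume_real_rect_inter_agreeSet hc hx hy, min_eq_left hle, min_eq_left hxlt.le,
    min_eq_right hylt]
  field_simp
  ring

end AgreeSet

lemma Nat.le_sInf_setOf_and_not_succ_iff {P : ℕ → Prop} (hP : Antitone P) (h0 : P 0)
    (hN : ∃ N, ¬P N) (j : ℕ) : j ≤ sInf {n | P n ∧ ¬P (n + 1)} ↔ P j := by
  have hne : {n | P n ∧ ¬P (n + 1)}.Nonempty := by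
    by_contra hempty
    simp only [not_nonempty_iff_eq_empty, eq_empty_iff_forall_notMem, mem_ofPred_eq, not_and,
      not_not] at hempty
    obtain ⟨N, hN⟩ := hN
    exact hN (Nat.rec h0 hempty N)
  obtain ⟨hn, hn1⟩ := Nat.sInf_mem hne
  refine ⟨fun hj => hP hj hn, fun hj => ?_⟩
  by_contra! hlt
  exact hn1 (hP hlt hj)

lemma exists_floor_pow_mul_ne {b u v : ℝ} (hb : 1 < b) (huv : u ≠ v) :
    ∃ j : ℕ, ⌊b ^ j * u⌋ ≠ ⌊b ^ j * v⌋ := by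
  have hpos : 0 < |u - v| := abs_pos.mpr (sub_ne_zero.mpr huv)
  obtain ⟨j, hj⟩ := pow_unbounded_of_one_lt (1 / |u - v|) hb
  refine ⟨j, fun h => ?_⟩
  have hclose := Int.abs_sub_lt_one_of_floor_eq_floor h
  rw [← mul_sub, abs_mul, abs_of_pos (by positivity)] at hclose
  linarith [(div_lt_iff₀ hpos).mp hj]

section Gamma

variable {b : ℕ} {u v x y : ℝ}

lemma le_gammaB_iff (hb : 1 < b) (hu : u ∈ Ico (0 : ℝ) 1) (hv : v ∈ Ico (0 : ℝ) 1) (j : ℕ) :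
    (j : ℕ∞) ≤ gammaB b u v ↔ (u, v) ∈ agreeSet ((b : ℝ) ^ j) := by
  by_cases huv : u = v
  · simp [gammaB, huv, agreeSet]
  rw [gammaB, if_neg huv, Nat.cast_le]
  refine Nat.le_sInf_setOf_and_not_succ_iff (P := fun j => (u, v) ∈ agreeSet ((b : ℝ) ^ j))
    (fun _ _ hij h => antitone_agreeSet_pow (b := b) (by omega) hij h) ?_
    (exists_floor_pow_mul_ne (by exact_mod_cast hb) huv) j
  simp [agreeSet, Int.floor_eq_zero_iff.mpr hu, Int.floor_eq_zero_iff.mpr hv]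

lemma gammaB_eq_iff (hb : 1 < b) (hu : u ∈ Ico (0 : ℝ) 1) (hv : v ∈ Ico (0 : ℝ) 1) (i : ℕ) :
    gammaB b u v = i ↔
      (u, v) ∈ agreeSet ((b : ℝ) ^ i) ∧ (u, v) ∉ agreeSet ((b : ℝ) ^ (i + 1)) := by
  rw [← le_gammaB_iff hb hu hv, ← le_gammaB_iff hb hu hv, Nat.cast_succ,
    ENat.add_one_le_iff (ENat.natCast_ne_top i), not_lt, le_antisymm_iff, and_comm]

lemma rect_inter_Dset_eq_sdiff (hb : 1 < b) (hx : x ≤ 1) (hy : y ≤ 1) (i : ℕ) :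
    Ico 0 x ×ˢ Ico 0 y ∩ Dset b i =
      (Ico 0 x ×ˢ Ico 0 y ∩ agreeSet ((b : ℝ) ^ i)) \
        (Ico 0 x ×ˢ Ico 0 y ∩ agreeSet ((b : ℝ) ^ (i + 1))) := by
  ext ⟨u, v⟩
  constructor
  · rintro ⟨hR, hu, hv, hγ⟩
    obtain ⟨hi, hi1⟩ := (gammaB_eq_iff hb hu hv i).mp hγ
    exact ⟨⟨hR, hi⟩, fun h => hi1 h.2⟩
  · rintro ⟨⟨hR, hi⟩, hi1⟩
    have hu : u ∈ Ico (0 : ℝ) 1 := ⟨hR.1.1, hR.1.2.trans_le hx⟩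
    have hv : v ∈ Ico (0 : ℝ) 1 := ⟨hR.2.1, hR.2.2.trans_le hy⟩
    exact ⟨hR, hu, hv, (gammaB_eq_iff hb hu hv i).mpr ⟨hi, fun h => hi1 ⟨hR, h⟩⟩⟩

lemma Vi_eq_sub (hb : 1 < b) (hx : x ≤ 1) (hy : y ≤ 1) (i : ℕ) :
    Vi b i x y = volume.real (Ico 0 x ×ˢ Ico 0 y ∩ agreeSet ((b : ℝ) ^ i)) -
      volume.real (Ico 0 x ×ˢ Ico 0 y ∩ agreeSet ((b : ℝ) ^ (i + 1))) := by
  rw [Vi, ← measureReal_def, rect_inter_Dset_eq_sdiff hb hx hy, measureReal_sdiff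
    (inter_subset_inter_right _ (antitone_agreeSet_pow (by omega) (Nat.le_succ i)))
    ((measurableSet_Ico.prod measurableSet_Ico).inter (measurableSet_agreeSet _))
    (((Metric.isBounded_Ico 0 x).prod (Metric.isBounded_Ico 0 y)).subset
      inter_subset_left).measure_lt_top.ne]

end Gamma

theorem stmt0 (b : ℕ) (hb : 2 ≤ b) (x y : ℝ)
    (hx : x ∈ Set.Ico (0 : ℝ) 1) (hy : y ∈ Set.Ico (0 : ℝ) 1) (i : ℕ)
    (hi hip1 : ℝ)
    (hhi : hi = (⌊(b : ℝ) ^ i * min x y⌋ : ℝ) / (b : ℝ) ^ i)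
    (hhip1 : hip1 = (⌊(b : ℝ) ^ (i + 1) * min x y⌋ : ℝ) / (b : ℝ) ^ (i + 1)) :
    (gammaB b x y < (i : ℕ∞) →
      Vi b i x y = ((b : ℝ) - 1) * min x y / (b : ℝ) ^ (i + 1)) ∧
    (gammaB b x y = (i : ℕ∞) →
      Vi b i x y = x * y - hi * (x + y - hi - 1 / (b : ℝ) ^ i) - min x y / (b : ℝ) ^ (i + 1)) ∧
    ((i : ℕ∞) < gammaB b x y →
      Vi b i x y = hip1 * (x + y - hip1 - 1 / (b : ℝ) ^ (i + 1))
        - hi * (x + y - hi - 1 / (b : ℝ) ^ i)) := by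
  have hpow : ∀ j : ℕ, 0 < (b : ℝ) ^ j := fun j => by positivity
  have hagree := le_gammaB_iff hb hx hy
  rw [Vi_eq_sub hb hx.2.le hy.2.le]
  refine ⟨fun hlt => ?_, fun heq => ?_, fun hgt => ?_⟩
  · have hi : (x, y) ∉ agreeSet ((b : ℝ) ^ i) := fun h => hlt.not_ge ((hagree i).mpr h)
    have hi1 : (x, y) ∉ agreeSet ((b : ℝ) ^ (i + 1)) :=
      fun h => hi (antitone_agreeSet_pow (by omega) (Nat.le_succ i) h)
    rw [volume_real_rect_inter_agreeSet_of_notMem (hpow i) hx.1 hy.1 hi,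
      volume_real_rect_inter_agreeSet_of_notMem (hpow (i + 1)) hx.1 hy.1 hi1, pow_succ]
    field_simp
  · obtain ⟨hi, hi1⟩ := (gammaB_eq_iff hb hx hy i).mp heq
    rw [volume_real_rect_inter_agreeSet_of_mem (hpow i) hx.1 hy.1 hi,
      volume_real_rect_inter_agreeSet_of_notMem (hpow (i + 1)) hx.1 hy.1 hi1, hhi]
  · have hi1 : (x, y) ∈ agreeSet ((b : ℝ) ^ (i + 1)) :=
      (hagree (i + 1)).mp (by rwa [Nat.cast_succ, ENat.add_one_le_iff (ENat.natCast_ne_top i)])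
    have hi : (x, y) ∈ agreeSet ((b : ℝ) ^ i) :=
      antitone_agreeSet_pow (by omega) (Nat.le_succ i) hi1
    rw [volume_real_rect_inter_agreeSet_of_mem (hpow i) hx.1 hy.1 hi,
      volume_real_rect_inter_agreeSet_of_mem (hpow (i + 1)) hx.1 hy.1 hi1, hhi, hhip1]
    ring
end

section
/- Fix an integer b ≥ 2. For all x, y ∈ [0,1] and every integer i ≥ 1, b·V_i(x,y) − V_{i−1}(x,y) ≥ 0. -/
set_option maxHeartbeats 1600000

open MeasureTheory
open scoped Classical

open Finset


noncomputable def cl (x a c : ℝ) : ℝ := max (min x c - a) 0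

lemma cl_nonneg (x a c : ℝ) : 0 ≤ cl x a c := le_max_right _ _

lemma cl_le (x a c : ℝ) (h : a ≤ c) : cl x a c ≤ c - a := by
  simp only [cl, min_def, max_def]; split_ifs <;> linarith

lemma cl_mono (x y a c : ℝ) (h : x ≤ y) : cl x a c ≤ cl y a c := by
  simp only [cl, min_def, max_def]; split_ifs <;> linarith

lemma cl_eq_zero (x a c : ℝ) (h : x ≤ a) : cl x a c = 0 := by
  simp only [cl, min_def, max_def]; split_ifs <;> linarith

lemma cl_eq_full (x a c : ℝ) (h : c ≤ x) (h2 : a ≤ c) : cl x a c = c - a := by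
  simp only [cl, min_def, max_def]; split_ifs <;> linarith

lemma cl_eq_self (x a c : ℝ) (h1 : a ≤ x) (h2 : x ≤ c) : cl x a c = x - a := by
  simp only [cl, min_def, max_def]; split_ifs <;> linarith

lemma cl_add (x a m c : ℝ) (h1 : a ≤ m) (h2 : m ≤ c) :
    cl x a m + cl x m c = cl x a c := by
  simp only [cl, min_def, max_def]; split_ifs <;> linarith

lemma cl_nest (x a s η H : ℝ) (hs : 0 ≤ s) (hη : 0 ≤ η) (hsH : s + η ≤ H) :
    cl x (a + s) (a + s + η) = cl (cl x a (a + H)) s (s + η) := by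
  simp only [cl, min_def, max_def]; split_ifs <;> linarith

lemma cl_scale (h x a c : ℝ) (hh : 0 ≤ h) :
    cl (h * x) (h * a) (h * c) = h * cl x a c := by
  unfold cl
  rw [← mul_min_of_nonneg _ _ hh, ← mul_sub, mul_max_of_nonneg _ _ hh, mul_zero]

lemma cl_blocksum (x h : ℝ) (hh : 0 ≤ h) (n : ℕ) :
    ∑ d ∈ range n, cl x ((d : ℝ) * h) ((d : ℝ) * h + h) = cl x 0 ((n : ℝ) * h) := by
  induction n with
  | zero => simp [cl]
  | succ n ih =>
    rw [Finset.sum_range_succ, ih]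
    have : ((n:ℝ)+1) * h = (n:ℝ)*h + h := by ring
    rw [show ((n+1 : ℕ):ℝ) = (n:ℝ)+1 by push_cast; ring, this,
      cl_add x 0 ((n:ℝ)*h) ((n:ℝ)*h + h) (by positivity) (by linarith)]

lemma key_expr (b : ℝ) (l e : ℕ) (s q : ℝ) (hb : 2 ≤ b)
    (hl : (l : ℝ) ≤ b - 1) (he : (e : ℝ) ≤ b - 1)
    (hs : 0 ≤ s) (hs1 : s ≤ 1) (hq : 0 ≤ q) (hq1 : q ≤ 1) :
    0 ≤ ((l : ℝ) + s) * (b - 1 - e) + ((b : ℝ) - 1 - l + q) * e + b * e * (b - 1 - e)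
      - l * (b - 1 - l) - l * q - s * (b - 1 - l) := by
  have hl0 : (0:ℝ) ≤ l := Nat.cast_nonneg l
  have he0 : (0:ℝ) ≤ e := Nat.cast_nonneg e
  rcases lt_trichotomy l e with h | h | h
  · have h1 : (l : ℝ) + 1 ≤ e := by exact_mod_cast Nat.succ_le_of_lt (by exact_mod_cast h)
    nlinarith [mul_nonneg (by linarith : (0:ℝ) ≤ (e:ℝ) - l)
        (by linarith : (0:ℝ) ≤ (b - 1 - l) + q - s),
      mul_nonneg hl0 (by linarith : (0:ℝ) ≤ b - 1 - e),
      mul_nonneg (mul_nonneg (by linarith : (0:ℝ) ≤ b) he0)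
        (by linarith : (0:ℝ) ≤ b - 1 - e)]
  · rw [h]
    nlinarith [mul_nonneg he0 (by linarith : (0:ℝ) ≤ b - 1 - e),
      mul_nonneg (mul_nonneg (by linarith : (0:ℝ) ≤ b) he0)
        (by linarith : (0:ℝ) ≤ b - 1 - e)]
  · have h1 : (e : ℝ) + 1 ≤ l := by exact_mod_cast Nat.succ_le_of_lt (by exact_mod_cast h)
    nlinarith [mul_nonneg (by linarith : (0:ℝ) ≤ (l:ℝ) - e)
        (by linarith : (0:ℝ) ≤ (l:ℝ) + s - q),
      mul_nonneg (mul_nonneg (by linarith : (0:ℝ) ≤ b) he0)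
        (by linarith : (0:ℝ) ≤ b - 1 - e),
      mul_nonneg (by linarith : (0:ℝ) ≤ b - 1 - l) he0]

lemma key_expr2 (b : ℝ) (l e : ℕ) (A B : ℝ) (hb : 2 ≤ b)
    (hl1 : 1 ≤ (l : ℝ)) (hlb : (l : ℝ) ≤ b) (he : (e : ℝ) ≤ b - 1)
    (hA0 : 0 ≤ A) (hB0 : 0 ≤ B) (hA : A ≤ l) (hB : B ≤ b - l) :
    A * B ≤ A * (b - 1 - e) + B * e + b * e * (b - 1 - e) := by
  have he0 : (0:ℝ) ≤ e := Nat.cast_nonneg e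
  rcases le_or_gt l e with h | h
  · have hle : (l : ℝ) ≤ e := by exact_mod_cast h
    nlinarith [mul_le_mul_of_nonneg_right (le_trans hA hle) hB0,
      mul_nonneg hA0 (by linarith : (0:ℝ) ≤ b - 1 - e),
      mul_nonneg (mul_nonneg (by linarith : (0:ℝ) ≤ b) he0)
        (by linarith : (0:ℝ) ≤ b - 1 - e)]
  · have hle : (e : ℝ) + 1 ≤ l := by exact_mod_cast Nat.succ_le_of_lt h
    nlinarith [mul_le_mul_of_nonneg_left (le_trans hB (by linarith : b - (l:ℝ) ≤ b - 1 - e)) hA0,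
      mul_nonneg hB0 he0,
      mul_nonneg (mul_nonneg (by linarith : (0:ℝ) ≤ b) he0)
        (by linarith : (0:ℝ) ≤ b - 1 - e)]


lemma loss_eq (Z W : ℝ) (n : ℕ) (η : ℝ) (hη : 0 ≤ η) (hZ1 : 0 ≤ Z) (hZ2 : Z ≤ (n:ℝ)*η) :
    ∑ d ∈ range n, cl Z ((d:ℝ)*η) ((d:ℝ)*η+η) * cl W ((d:ℝ)*η) ((d:ℝ)*η+η)
      = η*Z - ∑ d ∈ range n, cl Z ((d:ℝ)*η) ((d:ℝ)*η+η) * (η - cl W ((d:ℝ)*η) ((d:ℝ)*η+η)) := by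
  have hs : ∑ d ∈ range n, cl Z ((d:ℝ)*η) ((d:ℝ)*η+η) = Z := by
    rw [cl_blocksum Z η hη n, cl_eq_self Z 0 ((n:ℝ)*η) hZ1 hZ2, sub_zero]
  have : η*Z = ∑ d ∈ range n, cl Z ((d:ℝ)*η) ((d:ℝ)*η+η) * η := by
    rw [← Finset.sum_mul, hs]; ring
  rw [this, ← Finset.sum_sub_distrib]
  exact Finset.sum_congr rfl fun _ _ => by ring

lemma kernel_unit (b : ℕ) (hb : 2 ≤ b) (X Y : ℝ)
    (hX : 0 ≤ X) (hXY : X ≤ Y) (hY : Y ≤ (b : ℝ) * b) :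
    (b : ℝ) * (∑ r ∈ range (b * b), cl X ((r : ℝ) * 1) ((r : ℝ) * 1 + 1)
        * cl Y ((r : ℝ) * 1) ((r : ℝ) * 1 + 1)) + X * Y
      ≤ ((b : ℝ) + 1) * (∑ d ∈ range b, cl X ((d : ℝ) * (b : ℝ)) ((d : ℝ) * (b : ℝ) + (b : ℝ))
        * cl Y ((d : ℝ) * (b : ℝ)) ((d : ℝ) * (b : ℝ) + (b : ℝ))) := by
  have hb1 : (2:ℝ) ≤ (b:ℝ) := by exact_mod_cast hb
  have hbpos : (0:ℝ) < b := by linarith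
  have hY0 : 0 ≤ Y := le_trans hX hXY
  rw [loss_eq X Y b (b:ℝ) hbpos.le hX (by linarith),
    loss_eq X Y (b*b) 1 zero_le_one hX (by push_cast; linarith)]
  have hL0 : 0 ≤ ∑ r ∈ range (b*b), cl X ((r:ℝ)*1) ((r:ℝ)*1+1) * (1 - cl Y ((r:ℝ)*1) ((r:ℝ)*1+1)) := by
    apply Finset.sum_nonneg; intro r _
    have := cl_le Y ((r : ℝ) * 1) ((r : ℝ) * 1 + 1) (by linarith)
    exact mul_nonneg (cl_nonneg _ _ _) (by linarith)
  have main : ((b:ℝ)+1) * (∑ d ∈ range b, cl X ((d:ℝ)*(b:ℝ)) ((d:ℝ)*(b:ℝ)+(b:ℝ))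
        * ((b:ℝ) - cl Y ((d:ℝ)*(b:ℝ)) ((d:ℝ)*(b:ℝ)+(b:ℝ))))
      ≤ (b:ℝ) * (∑ r ∈ range (b*b), cl X ((r:ℝ)*1) ((r:ℝ)*1+1) * (1 - cl Y ((r:ℝ)*1) ((r:ℝ)*1+1)))
        + X*((b:ℝ)*(b:ℝ) - Y) := by
    by_cases H1 : ∃ d ∈ range b, (d:ℝ)*(b:ℝ) < X ∧ Y < (d:ℝ)*(b:ℝ) + (b:ℝ)
    · obtain ⟨D, hDb, hDX, hDY⟩ := H1
      have hDb' : (D:ℝ) + 1 ≤ (b:ℝ) := by exact_mod_cast Nat.succ_le_of_lt (Finset.mem_range.mp hDb)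
      have hL1val : ∑ d ∈ range b, cl X ((d:ℝ)*(b:ℝ)) ((d:ℝ)*(b:ℝ)+(b:ℝ))
          * ((b:ℝ) - cl Y ((d:ℝ)*(b:ℝ)) ((d:ℝ)*(b:ℝ)+(b:ℝ)))
          = (X - (D:ℝ)*(b:ℝ)) * ((b:ℝ) - (Y - (D:ℝ)*(b:ℝ))) := by
        rw [Finset.sum_eq_single_of_mem D hDb]
        · rw [cl_eq_self X _ _ hDX.le (by linarith),
            cl_eq_self Y _ _ (by linarith) (by linarith)]
        · intro d hd hne
          rcases lt_or_gt_of_ne hne with h | h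
          · have hd1 : (d:ℝ) + 1 ≤ (D:ℝ) := by exact_mod_cast Nat.succ_le_of_lt h
            have : (d:ℝ)*(b:ℝ) + (b:ℝ) ≤ Y := by nlinarith
            rw [cl_eq_full Y _ _ this (by linarith)]; ring
          · have hd1 : (D:ℝ) + 1 ≤ (d:ℝ) := by exact_mod_cast Nat.succ_le_of_lt h
            have : X ≤ (d:ℝ)*(b:ℝ) := by nlinarith
            rw [cl_eq_zero X _ _ this]; ring
      rw [hL1val]
      by_cases H0 : ∃ r ∈ range (b*b), (r:ℝ) < X ∧ Y < (r:ℝ) + 1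
      · obtain ⟨R, hRb, hRX, hRY⟩ := H0
        have hL0val : ∑ r ∈ range (b*b), cl X ((r:ℝ)*1) ((r:ℝ)*1+1) * (1 - cl Y ((r:ℝ)*1) ((r:ℝ)*1+1))
            = (X - (R:ℝ)) * (1 - (Y - (R:ℝ))) := by
          rw [Finset.sum_eq_single_of_mem R hRb]
          · rw [mul_one, cl_eq_self X _ _ (by linarith) (by linarith),
              cl_eq_self Y _ _ (by linarith) (by linarith)]
          · intro r hr hne
            rcases lt_or_gt_of_ne hne with h | h
            · have hr1 : (r:ℝ) + 1 ≤ (R:ℝ) := by exact_mod_cast Nat.succ_le_of_lt h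
              have hfull : (r:ℝ)*1 + 1 ≤ Y := by nlinarith
              rw [cl_eq_full Y _ _ hfull (by linarith)]; ring_nf
            · have hr1 : (R:ℝ) + 1 ≤ (r:ℝ) := by exact_mod_cast Nat.succ_le_of_lt h
              have hz : X ≤ (r:ℝ)*1 := by nlinarith
              rw [cl_eq_zero X _ _ hz]; ring
        rw [hL0val]
        -- locate R within block D
        have hRlow : D*b ≤ R := by
          by_contra hcon
          push_neg at hcon
          have h1 : (R:ℝ) + 1 ≤ ((D*b : ℕ):ℝ) := by exact_mod_cast Nat.succ_le_of_lt hcon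
          push_cast at h1
          nlinarith
        have hRhigh : R < (D+1)*b := by
          have h1 : (R:ℝ) < (((D+1)*b : ℕ):ℝ) := by push_cast; nlinarith
          exact_mod_cast h1
        have hDlin : (D+1)*b = D*b + b := by ring
        obtain ⟨l, hlb, rfl⟩ : ∃ l, l ≤ b - 1 ∧ R = D*b + l :=
          ⟨R - D*b, by omega, by omega⟩
        have hlb' : (l:ℝ) ≤ (b:ℝ) - 1 := by
          have h2 : (l:ℝ) + 1 ≤ (b:ℝ) := by exact_mod_cast Nat.succ_le_of_lt (by omega)
          linarith
        push_cast at hRX hRY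
        have key := key_expr (b:ℝ) l D (X - ((D:ℝ)*(b:ℝ) + l)) (((D:ℝ)*(b:ℝ) + l) + 1 - Y)
          hb1 hlb' (by linarith) (by linarith) (by linarith) (by linarith) (by linarith)
        push_cast
        nlinarith [mul_nonneg (by linarith : (0:ℝ) ≤ (b:ℝ)) key]
      · -- find integer point between X and Y
        push_neg at H0
        have hXpos : 0 < X := lt_of_le_of_lt (by positivity) hDX
        have hXr : X ≤ (⌈X⌉₊:ℝ) := Nat.le_ceil X
        have hrX1 : (⌈X⌉₊:ℝ) < X + 1 := Nat.ceil_lt_add_one hX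
        have hr1 : 1 ≤ ⌈X⌉₊ := Nat.one_le_ceil_iff.mpr hXpos
        have hrY : (⌈X⌉₊:ℝ) ≤ Y := by
          by_contra hcon
          push_neg at hcon
          have hmem : ⌈X⌉₊ - 1 ∈ range (b*b) := by
            rw [Finset.mem_range]
            have h1 : (⌈X⌉₊:ℝ) < ((b*b : ℕ):ℝ) + 1 := by push_cast; nlinarith
            have h2 : ⌈X⌉₊ < b*b + 1 := by exact_mod_cast h1
            omega
          have h3 := H0 (⌈X⌉₊-1) hmem
          rw [Nat.cast_sub hr1, Nat.cast_one] at h3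
          rcases lt_or_ge ((⌈X⌉₊:ℝ) - 1) X with h | h
          · have := h3 h; nlinarith
          · nlinarith
        have hrlow : D*b < ⌈X⌉₊ := by
          have h1 : ((D*b : ℕ):ℝ) < (⌈X⌉₊:ℝ) := by push_cast; nlinarith
          exact_mod_cast h1
        have hrhigh : ⌈X⌉₊ ≤ (D+1)*b := by
          have h1 : (⌈X⌉₊:ℝ) < (((D+1)*b : ℕ):ℝ) + 1 := by push_cast; nlinarith
          have h2 : ⌈X⌉₊ < (D+1)*b + 1 := by exact_mod_cast h1
          omega
        have hDlin : (D+1)*b = D*b + b := by ring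
        obtain ⟨l, hl1n, hlbn, hrl⟩ : ∃ l, 1 ≤ l ∧ l ≤ b ∧ ⌈X⌉₊ = D*b + l :=
          ⟨⌈X⌉₊ - D*b, by omega, by omega, by omega⟩
        rw [hrl] at hXr hrY
        push_cast at hXr hrY
        have key := key_expr2 (b:ℝ) l D (X - (D:ℝ)*(b:ℝ)) ((b:ℝ) - (Y - (D:ℝ)*(b:ℝ)))
          hb1 (by exact_mod_cast hl1n) (by exact_mod_cast hlbn) (by linarith)
          (by linarith) (by linarith) (by linarith) (by linarith)
        nlinarith [mul_nonneg (by linarith : (0:ℝ) ≤ (b:ℝ)) (sub_nonneg.mpr key),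
          mul_nonneg (by linarith : (0:ℝ) ≤ (b:ℝ)) hL0]
    · -- L1 = 0
      push_neg at H1
      have hL1val : ∑ d ∈ range b, cl X ((d:ℝ)*(b:ℝ)) ((d:ℝ)*(b:ℝ)+(b:ℝ))
          * ((b:ℝ) - cl Y ((d:ℝ)*(b:ℝ)) ((d:ℝ)*(b:ℝ)+(b:ℝ))) = 0 := by
        apply Finset.sum_eq_zero
        intro d hd
        rcases le_or_gt X ((d:ℝ)*(b:ℝ)) with h | h
        · rw [cl_eq_zero X _ _ h]; ring
        · have := H1 d hd h
          rw [cl_eq_full Y _ _ this (by linarith)]; ring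
      rw [hL1val]
      nlinarith [mul_nonneg hX (by linarith : (0:ℝ) ≤ (b:ℝ)*(b:ℝ) - Y),
        mul_nonneg (by linarith : (0:ℝ) ≤ (b:ℝ)) hL0]
  linarith

lemma kernel_scaled (b : ℕ) (hb : 2 ≤ b) (h X Y : ℝ) (hh : 0 < h)
    (hX : 0 ≤ X) (hXY : X ≤ Y) (hY : Y ≤ (b : ℝ) * b * h) :
    (b : ℝ) * (∑ r ∈ range (b * b), cl X ((r : ℝ) * h) ((r : ℝ) * h + h)
        * cl Y ((r : ℝ) * h) ((r : ℝ) * h + h)) + X * Y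
      ≤ ((b : ℝ) + 1) * (∑ d ∈ range b,
          cl X ((d : ℝ) * ((b:ℝ) * h)) ((d : ℝ) * ((b:ℝ) * h) + (b:ℝ) * h)
        * cl Y ((d : ℝ) * ((b:ℝ) * h)) ((d : ℝ) * ((b:ℝ) * h) + (b:ℝ) * h)) := by
  have hne : h ≠ 0 := ne_of_gt hh
  have hsc : ∀ (Z a c : ℝ), cl Z (h*a) (h*c) = h * cl (Z/h) a c := by
    intro Z a c
    conv_lhs => rw [show Z = h * (Z/h) by field_simp]
    exact cl_scale h (Z/h) a c hh.le
  have hs0 : ∀ Z : ℝ, ∀ r : ℕ, cl Z ((r:ℝ)*h) ((r:ℝ)*h+h) = h * cl (Z/h) ((r:ℝ)*1) ((r:ℝ)*1+1) := by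
    intro Z r
    rw [show ((r:ℝ)*h+h) = h*((r:ℝ)*1+1) by ring, show ((r:ℝ)*h) = h * ((r:ℝ)*1) by ring]
    exact hsc Z _ _
  have hs1 : ∀ Z : ℝ, ∀ d : ℕ, cl Z ((d:ℝ)*((b:ℝ)*h)) ((d:ℝ)*((b:ℝ)*h)+(b:ℝ)*h)
      = h * cl (Z/h) ((d:ℝ)*(b:ℝ)) ((d:ℝ)*(b:ℝ)+(b:ℝ)) := by
    intro Z d
    rw [show ((d:ℝ)*((b:ℝ)*h)+(b:ℝ)*h) = h*((d:ℝ)*(b:ℝ)+(b:ℝ)) by ring,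
      show ((d:ℝ)*((b:ℝ)*h)) = h * ((d:ℝ)*(b:ℝ)) by ring]
    exact hsc Z _ _
  have e0 : ∑ r ∈ range (b*b), cl X ((r:ℝ)*h) ((r:ℝ)*h+h) * cl Y ((r:ℝ)*h) ((r:ℝ)*h+h)
      = (h*h) * ∑ r ∈ range (b*b), cl (X/h) ((r:ℝ)*1) ((r:ℝ)*1+1) * cl (Y/h) ((r:ℝ)*1) ((r:ℝ)*1+1) := by
    rw [Finset.mul_sum]
    apply Finset.sum_congr rfl
    intro r _
    rw [hs0 X r, hs0 Y r]; ring
  have e1 : ∑ d ∈ range b, cl X ((d:ℝ)*((b:ℝ)*h)) ((d:ℝ)*((b:ℝ)*h)+(b:ℝ)*h)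
        * cl Y ((d:ℝ)*((b:ℝ)*h)) ((d:ℝ)*((b:ℝ)*h)+(b:ℝ)*h)
      = (h*h) * ∑ d ∈ range b, cl (X/h) ((d:ℝ)*(b:ℝ)) ((d:ℝ)*(b:ℝ)+(b:ℝ))
        * cl (Y/h) ((d:ℝ)*(b:ℝ)) ((d:ℝ)*(b:ℝ)+(b:ℝ)) := by
    rw [Finset.mul_sum]
    apply Finset.sum_congr rfl
    intro d _
    rw [hs1 X d, hs1 Y d]; ring
  have hXYe : X*Y = (h*h) * ((X/h) * (Y/h)) := by field_simp
  have K := kernel_unit b hb (X/h) (Y/h) (by positivity)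
    (div_le_div_of_nonneg_right hXY hh.le)
    (by rw [div_le_iff₀ hh]; linarith)
  have K2 := mul_le_mul_of_nonneg_left K (by positivity : (0:ℝ) ≤ h*h)
  rw [e0, e1, hXYe]
  nlinarith [K2]

lemma sum_range_mul_reindex (f : ℕ → ℝ) (n k : ℕ) :
    ∑ p ∈ range (n * k), f p = ∑ W ∈ range n, ∑ l ∈ range k, f (W * k + l) := by
  induction n with
  | zero => simp
  | succ n ih =>
    rw [Finset.sum_range_succ, ← ih, show (n+1)*k = n*k + k by ring, Finset.sum_range_add]

noncomputable def G (b j : ℕ) (x y : ℝ) : ℝ :=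
  ∑ p ∈ range (b^j), cl x ((p:ℝ) * ((b:ℝ)^j)⁻¹) ((p:ℝ) * ((b:ℝ)^j)⁻¹ + ((b:ℝ)^j)⁻¹)
    * cl y ((p:ℝ) * ((b:ℝ)^j)⁻¹) ((p:ℝ) * ((b:ℝ)^j)⁻¹ + ((b:ℝ)^j)⁻¹)

lemma G_symm (b j : ℕ) (x y : ℝ) : G b j x y = G b j y x :=
  Finset.sum_congr rfl fun _ _ => mul_comm _ _

lemma alg_main (b : ℕ) (hb : 2 ≤ b) (j : ℕ) (x y : ℝ) (hx0 : 0 ≤ x) (hxy : x ≤ y) :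
    (b:ℝ) * G b (j+2) x y + G b j x y ≤ ((b:ℝ)+1) * G b (j+1) x y := by
  have hbR : (2:ℝ) ≤ (b:ℝ) := by exact_mod_cast hb
  have hbpos : (0:ℝ) < b := by linarith
  set h0 : ℝ := ((b:ℝ)^(j+2))⁻¹ with hh0
  have h0pos : 0 < h0 := by rw [hh0]; positivity
  have e1 : ((b:ℝ)^(j+1))⁻¹ = (b:ℝ)*h0 := by
    rw [hh0, show ((b:ℝ)^(j+2)) = (b:ℝ)^(j+1) * b from pow_succ _ _]
    field_simp
  have e2 : ((b:ℝ)^j)⁻¹ = (b:ℝ)*(b:ℝ)*h0 := by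
    rw [hh0, show ((b:ℝ)^(j+2)) = (b:ℝ)^j * b * b by rw [pow_succ, pow_succ]]
    have : (b:ℝ)^j ≠ 0 := by positivity
    field_simp
  have A1 : G b (j+1) x y = ∑ W ∈ range (b^j), ∑ d ∈ range b,
      cl (cl x ((W:ℝ)*((b:ℝ)*(b:ℝ)*h0)) ((W:ℝ)*((b:ℝ)*(b:ℝ)*h0) + (b:ℝ)*(b:ℝ)*h0))
          ((d:ℝ)*((b:ℝ)*h0)) ((d:ℝ)*((b:ℝ)*h0) + (b:ℝ)*h0)
      * cl (cl y ((W:ℝ)*((b:ℝ)*(b:ℝ)*h0)) ((W:ℝ)*((b:ℝ)*(b:ℝ)*h0) + (b:ℝ)*(b:ℝ)*h0))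
          ((d:ℝ)*((b:ℝ)*h0)) ((d:ℝ)*((b:ℝ)*h0) + (b:ℝ)*h0) := by
    unfold G
    rw [show b^(j+1) = b^j*b from pow_succ b j, sum_range_mul_reindex]
    apply Finset.sum_congr rfl; intro W _
    apply Finset.sum_congr rfl; intro d hd
    have hdb : (d:ℝ) + 1 ≤ (b:ℝ) := by exact_mod_cast Nat.succ_le_of_lt (Finset.mem_range.mp hd)
    rw [e1]
    have hbase : ((W*b+d : ℕ):ℝ) * ((b:ℝ)*h0)
        = (W:ℝ)*((b:ℝ)*(b:ℝ)*h0) + (d:ℝ)*((b:ℝ)*h0) := by push_cast; ring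
    rw [hbase]
    have hcond : (d:ℝ)*((b:ℝ)*h0) + (b:ℝ)*h0 ≤ (b:ℝ)*(b:ℝ)*h0 := by
      nlinarith [mul_le_mul_of_nonneg_right hdb (mul_pos hbpos h0pos).le]
    rw [cl_nest x ((W:ℝ)*((b:ℝ)*(b:ℝ)*h0)) ((d:ℝ)*((b:ℝ)*h0)) ((b:ℝ)*h0) ((b:ℝ)*(b:ℝ)*h0)
        (by positivity) (by positivity) hcond,
      cl_nest y ((W:ℝ)*((b:ℝ)*(b:ℝ)*h0)) ((d:ℝ)*((b:ℝ)*h0)) ((b:ℝ)*h0) ((b:ℝ)*(b:ℝ)*h0)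
        (by positivity) (by positivity) hcond]
  have A2 : G b (j+2) x y = ∑ W ∈ range (b^j), ∑ r ∈ range (b*b),
      cl (cl x ((W:ℝ)*((b:ℝ)*(b:ℝ)*h0)) ((W:ℝ)*((b:ℝ)*(b:ℝ)*h0) + (b:ℝ)*(b:ℝ)*h0))
          ((r:ℝ)*h0) ((r:ℝ)*h0 + h0)
      * cl (cl y ((W:ℝ)*((b:ℝ)*(b:ℝ)*h0)) ((W:ℝ)*((b:ℝ)*(b:ℝ)*h0) + (b:ℝ)*(b:ℝ)*h0))
          ((r:ℝ)*h0) ((r:ℝ)*h0 + h0) := by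
    unfold G
    rw [show b^(j+2) = b^j*(b*b) by ring, sum_range_mul_reindex]
    apply Finset.sum_congr rfl; intro W _
    apply Finset.sum_congr rfl; intro r hr
    have hrb : (r:ℝ) + 1 ≤ ((b*b : ℕ):ℝ) := by
      exact_mod_cast Nat.succ_le_of_lt (Finset.mem_range.mp hr)
    push_cast at hrb
    have hbase : ((W*(b*b)+r : ℕ):ℝ) * h0
        = (W:ℝ)*((b:ℝ)*(b:ℝ)*h0) + (r:ℝ)*h0 := by push_cast; ring
    rw [hbase]
    have hcond : (r:ℝ)*h0 + h0 ≤ (b:ℝ)*(b:ℝ)*h0 := by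
      nlinarith [mul_le_mul_of_nonneg_right hrb h0pos.le]
    rw [cl_nest x ((W:ℝ)*((b:ℝ)*(b:ℝ)*h0)) ((r:ℝ)*h0) h0 ((b:ℝ)*(b:ℝ)*h0)
        (by positivity) (by positivity) hcond,
      cl_nest y ((W:ℝ)*((b:ℝ)*(b:ℝ)*h0)) ((r:ℝ)*h0) h0 ((b:ℝ)*(b:ℝ)*h0)
        (by positivity) (by positivity) hcond]
  have A0 : G b j x y = ∑ W ∈ range (b^j),
      cl x ((W:ℝ)*((b:ℝ)*(b:ℝ)*h0)) ((W:ℝ)*((b:ℝ)*(b:ℝ)*h0) + (b:ℝ)*(b:ℝ)*h0)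
      * cl y ((W:ℝ)*((b:ℝ)*(b:ℝ)*h0)) ((W:ℝ)*((b:ℝ)*(b:ℝ)*h0) + (b:ℝ)*(b:ℝ)*h0) := by
    unfold G
    rw [e2]
  rw [A0, A1, A2, Finset.mul_sum, Finset.mul_sum, ← Finset.sum_add_distrib]
  apply Finset.sum_le_sum
  intro W _
  apply kernel_scaled b hb h0 _ _ h0pos (cl_nonneg _ _ _) (cl_mono x y _ _ hxy)
  have := cl_le y ((W:ℝ)*((b:ℝ)*(b:ℝ)*h0)) ((W:ℝ)*((b:ℝ)*(b:ℝ)*h0) + (b:ℝ)*(b:ℝ)*h0)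
    (by nlinarith)
  linarith

lemma floor_step (B : ℕ) (hB : 1 ≤ B) (t s : ℝ) (h : ⌊(B:ℝ)*t⌋ = ⌊(B:ℝ)*s⌋) :
    ⌊t⌋ = ⌊s⌋ := by
  have hBpos : (0:ℝ) < B := by exact_mod_cast Nat.lt_of_lt_of_le Nat.zero_lt_one hB
  have key : ∀ a c : ℝ, ⌊(B:ℝ)*a⌋ = ⌊(B:ℝ)*c⌋ → ⌊a⌋ ≤ ⌊c⌋ := by
    intro a c hac
    have h1 : ((B:ℤ) * ⌊a⌋ : ℤ) ≤ ⌊(B:ℝ)*a⌋ := by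
      apply Int.le_floor.2
      push_cast
      exact mul_le_mul_of_nonneg_left (Int.floor_le a) hBpos.le
    rw [hac] at h1
    have h2 : ((B:ℝ) * (⌊a⌋:ℝ)) ≤ (B:ℝ)*c := by
      calc ((B:ℝ) * (⌊a⌋:ℝ)) = (((B:ℤ) * ⌊a⌋ : ℤ) : ℝ) := by push_cast; ring
        _ ≤ ((⌊(B:ℝ)*c⌋ : ℤ) : ℝ) := by exact_mod_cast h1
        _ ≤ (B:ℝ)*c := Int.floor_le _
    have h3 : (⌊a⌋:ℝ) ≤ c := le_of_mul_le_mul_left h2 hBpos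
    exact Int.le_floor.2 h3
  exact le_antisymm (key t s h) (key s t h.symm)

lemma floor_pow_mono (b : ℕ) (hb : 1 ≤ b) (u v : ℝ) (k m : ℕ)
    (h : ⌊(b:ℝ)^(k+m)*u⌋ = ⌊(b:ℝ)^(k+m)*v⌋) : ⌊(b:ℝ)^k*u⌋ = ⌊(b:ℝ)^k*v⌋ := by
  induction m with
  | zero => exact h
  | succ m ih =>
    apply ih
    apply floor_step b hb
    rw [show (b:ℝ)*((b:ℝ)^(k+m)*u) = (b:ℝ)^(k+(m+1))*u by
        rw [show k+(m+1) = (k+m)+1 by omega, pow_succ]; ring,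
      show (b:ℝ)*((b:ℝ)^(k+m)*v) = (b:ℝ)^(k+(m+1))*v by
        rw [show k+(m+1) = (k+m)+1 by omega, pow_succ]; ring]
    exact h

lemma floor_pow_le (b : ℕ) (hb : 1 ≤ b) (u v : ℝ) (k i : ℕ) (hk : k ≤ i)
    (h : ⌊(b:ℝ)^i*u⌋ = ⌊(b:ℝ)^i*v⌋) : ⌊(b:ℝ)^k*u⌋ = ⌊(b:ℝ)^k*v⌋ := by
  obtain ⟨m, rfl⟩ := Nat.exists_eq_add_of_le hk
  exact floor_pow_mono b hb u v k m h

lemma exists_disagree (b : ℕ) (hb : 2 ≤ b) (u v : ℝ) (hne : u ≠ v) :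
    ∃ k, ⌊(b:ℝ)^k*u⌋ ≠ ⌊(b:ℝ)^k*v⌋ := by
  have hbR : (1:ℝ) < (b:ℝ) := by exact_mod_cast hb
  have habs : 0 < |u - v| := abs_pos.mpr (sub_ne_zero.mpr hne)
  obtain ⟨k, hk⟩ := pow_unbounded_of_one_lt (|u - v|)⁻¹ hbR
  refine ⟨k, fun hcon => ?_⟩
  have h1 : |(b:ℝ)^k*u - (b:ℝ)^k*v| < 1 := Int.abs_sub_lt_one_of_floor_eq_floor hcon
  have h2 : |(b:ℝ)^k*u - (b:ℝ)^k*v| = (b:ℝ)^k * |u - v| := by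
    rw [← mul_sub, abs_mul, abs_of_nonneg (by positivity : (0:ℝ) ≤ (b:ℝ)^k)]
  rw [h2] at h1
  have h3 := mul_lt_mul_of_pos_right hk habs
  rw [inv_mul_cancel₀ habs.ne'] at h3
  linarith

lemma gamma_char (b : ℕ) (hb : 2 ≤ b) (u v : ℝ)
    (hu : u ∈ Set.Ico (0:ℝ) 1) (hv : v ∈ Set.Ico (0:ℝ) 1) (i : ℕ) :
    gammaB b u v = (i : ℕ∞) ↔
      (⌊(b:ℝ)^i*u⌋ = ⌊(b:ℝ)^i*v⌋ ∧ ⌊(b:ℝ)^(i+1)*u⌋ ≠ ⌊(b:ℝ)^(i+1)*v⌋) := by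
  constructor
  · intro hg
    by_cases he : u = v
    · rw [gammaB, if_pos he] at hg
      exact absurd hg.symm (by simp)
    · rw [gammaB, if_neg he] at hg
      have hinf : sInf {k : ℕ | ⌊(b : ℝ) ^ k * u⌋ = ⌊(b : ℝ) ^ k * v⌋ ∧
          ⌊(b : ℝ) ^ (k + 1) * u⌋ ≠ ⌊(b : ℝ) ^ (k + 1) * v⌋} = i := by exact_mod_cast hg
      -- the set is nonempty
      obtain ⟨k, hk⟩ := exists_disagree b hb u v he
      have hT : {k : ℕ | ⌊(b:ℝ)^k*u⌋ ≠ ⌊(b:ℝ)^k*v⌋}.Nonempty := ⟨k, hk⟩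
      have hk0 := Nat.sInf_mem hT
      set k0 := sInf {k : ℕ | ⌊(b:ℝ)^k*u⌋ ≠ ⌊(b:ℝ)^k*v⌋} with hk0def
      have hzero : ⌊(b:ℝ)^0*u⌋ = ⌊(b:ℝ)^0*v⌋ := by
        rw [pow_zero, one_mul, one_mul, Int.floor_eq_zero_iff.mpr hu,
          Int.floor_eq_zero_iff.mpr hv]
      have hk0ne : k0 ≠ 0 := by
        intro hcon
        rw [hcon] at hk0
        exact hk0 hzero
      obtain ⟨m, hm⟩ := Nat.exists_eq_succ_of_ne_zero hk0ne
      have hmeq : ⌊(b:ℝ)^m*u⌋ = ⌊(b:ℝ)^m*v⌋ := by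
        by_contra hcon
        exact Nat.notMem_of_lt_sInf (by omega : m < k0) hcon
      have hmem : m ∈ {k : ℕ | ⌊(b : ℝ) ^ k * u⌋ = ⌊(b : ℝ) ^ k * v⌋ ∧
          ⌊(b : ℝ) ^ (k + 1) * u⌋ ≠ ⌊(b : ℝ) ^ (k + 1) * v⌋} := by
        refine ⟨hmeq, ?_⟩
        rw [show m + 1 = k0 from hm.symm]
        exact hk0
      have := Nat.sInf_mem (⟨m, hmem⟩ : Set.Nonempty _)
      rwa [hinf] at this
  · rintro ⟨h1, h2⟩
    have hne : u ≠ v := by rintro rfl; exact h2 rfl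
    rw [gammaB, if_neg hne]
    have hmem : i ∈ {k : ℕ | ⌊(b : ℝ) ^ k * u⌋ = ⌊(b : ℝ) ^ k * v⌋ ∧
        ⌊(b : ℝ) ^ (k + 1) * u⌋ ≠ ⌊(b : ℝ) ^ (k + 1) * v⌋} := ⟨h1, h2⟩
    have h5 : sInf {k : ℕ | ⌊(b : ℝ) ^ k * u⌋ = ⌊(b : ℝ) ^ k * v⌋ ∧
        ⌊(b : ℝ) ^ (k + 1) * u⌋ ≠ ⌊(b : ℝ) ^ (k + 1) * v⌋} = i := by
      refine le_antisymm (Nat.sInf_le hmem) ?_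
      by_contra hcon
      push_neg at hcon
      have hmem2 := Nat.sInf_mem (⟨i, hmem⟩ : Set.Nonempty _)
      refine hmem2.2 (floor_pow_le b (by omega) u v _ i (by omega) h1)
    rw [h5]

def Aset (b j : ℕ) : Set (ℝ × ℝ) :=
  {p | p.1 ∈ Set.Ico (0:ℝ) 1 ∧ p.2 ∈ Set.Ico (0:ℝ) 1 ∧
    ⌊(b:ℝ)^j * p.1⌋ = ⌊(b:ℝ)^j * p.2⌋}

lemma Aset_eq_union (b j : ℕ) (hb : 2 ≤ b) :
    Aset b j = ⋃ p ∈ Finset.range (b^j),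
      (Set.Ico ((p:ℝ)/(b:ℝ)^j) (((p:ℝ)+1)/(b:ℝ)^j)
        ×ˢ Set.Ico ((p:ℝ)/(b:ℝ)^j) (((p:ℝ)+1)/(b:ℝ)^j)) := by
  have hbj : (0:ℝ) < (b:ℝ)^j := by positivity
  ext ⟨u, v⟩
  simp only [Aset, Set.mem_setOf_eq, Set.mem_iUnion, Set.mem_prod, Finset.mem_range,
    Set.mem_Ico]
  constructor
  · rintro ⟨⟨hu0, hu1⟩, ⟨hv0, hv1⟩, heq⟩
    set n := ⌊(b:ℝ)^j * u⌋ with hn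
    have hn0 : 0 ≤ n := Int.floor_nonneg.2 (by positivity)
    have hnlt : n < ((b^j : ℕ) : ℤ) := by
      apply Int.floor_lt.2
      push_cast
      nlinarith
    refine ⟨n.toNat, ?_, ⟨?_, ?_⟩, ⟨?_, ?_⟩⟩
    · omega
    · rw [div_le_iff₀ hbj]
      have := Int.floor_le ((b:ℝ)^j * u)
      rw [← hn] at this
      rw [show ((n.toNat : ℕ) : ℝ) = (n : ℝ) by exact_mod_cast congrArg Int.cast (Int.toNat_of_nonneg hn0)]
      linarith
    · rw [lt_div_iff₀ hbj]
      have := Int.lt_floor_add_one ((b:ℝ)^j * u)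
      rw [← hn] at this
      rw [show ((n.toNat : ℕ) : ℝ) = (n : ℝ) by exact_mod_cast congrArg Int.cast (Int.toNat_of_nonneg hn0)]
      linarith
    · rw [div_le_iff₀ hbj]
      have := Int.floor_le ((b:ℝ)^j * v)
      rw [← heq] at this
      rw [show ((n.toNat : ℕ) : ℝ) = (n : ℝ) by exact_mod_cast congrArg Int.cast (Int.toNat_of_nonneg hn0)]
      linarith
    · rw [lt_div_iff₀ hbj]
      have := Int.lt_floor_add_one ((b:ℝ)^j * v)
      rw [← heq] at this
      rw [show ((n.toNat : ℕ) : ℝ) = (n : ℝ) by exact_mod_cast congrArg Int.cast (Int.toNat_of_nonneg hn0)]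
      linarith
  · rintro ⟨p, hp, ⟨hu1, hu2⟩, ⟨hv1, hv2⟩⟩
    have hp1 : ((p:ℝ)+1) ≤ (b:ℝ)^j := by
      have : (p:ℝ) + 1 ≤ ((b^j : ℕ):ℝ) := by exact_mod_cast Nat.succ_le_of_lt hp
      push_cast at this
      exact this
    have hp0 : (0:ℝ) ≤ (p:ℝ) := Nat.cast_nonneg p
    have hfl : ∀ w : ℝ, (p:ℝ)/(b:ℝ)^j ≤ w → w < ((p:ℝ)+1)/(b:ℝ)^j → ⌊(b:ℝ)^j * w⌋ = (p:ℤ) := by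
      intro w hw1 hw2
      apply Int.floor_eq_iff.2
      constructor
      · push_cast
        rw [div_le_iff₀ hbj] at hw1
        linarith
      · push_cast
        rw [lt_div_iff₀ hbj] at hw2
        linarith
    constructor
    · constructor
      · calc (0:ℝ) ≤ (p:ℝ)/(b:ℝ)^j := by positivity
          _ ≤ u := hu1
      · calc u < ((p:ℝ)+1)/(b:ℝ)^j := hu2
          _ ≤ 1 := by rw [div_le_one hbj]; linarith
    constructor
    · constructor
      · calc (0:ℝ) ≤ (p:ℝ)/(b:ℝ)^j := by positivity
          _ ≤ v := hv1
      · calc v < ((p:ℝ)+1)/(b:ℝ)^j := hv2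
          _ ≤ 1 := by rw [div_le_one hbj]; linarith
    · rw [hfl u hu1 hu2, hfl v hv1 hv2]

lemma ofReal_cl (x a c : ℝ) : ENNReal.ofReal (min x c - a) = ENNReal.ofReal (cl x a c) := by
  unfold cl
  rcases le_total (min x c - a) 0 with h | h
  · rw [max_eq_right h, ENNReal.ofReal_of_nonpos h, ENNReal.ofReal_zero]
  · rw [max_eq_left h]

lemma Aset_meas (b j : ℕ) (hb : 2 ≤ b) : MeasurableSet (Aset b j) := by
  rw [Aset_eq_union b j hb]
  apply Set.Finite.measurableSet_biUnion (Finset.finite_toSet _)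
  intro p _
  exact (measurableSet_Ico.prod measurableSet_Ico)

lemma Aset_sub (b j : ℕ) (hb : 2 ≤ b) : Aset b (j+1) ⊆ Aset b j := by
  rintro ⟨u, v⟩ ⟨hu, hv, he⟩
  exact ⟨hu, hv, floor_pow_le b (by omega) u v j (j+1) (by omega) he⟩

lemma Dset_eq (b i : ℕ) (hb : 2 ≤ b) : Dset b i = Aset b i \ Aset b (i+1) := by
  ext ⟨u, v⟩
  simp only [Dset, Aset, Set.mem_setOf_eq, Set.mem_diff]
  constructor
  · rintro ⟨hu, hv, hg⟩
    have h := (gamma_char b hb u v hu hv i).1 hg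
    exact ⟨⟨hu, hv, h.1⟩, fun hA => h.2 hA.2.2⟩
  · rintro ⟨⟨hu, hv, h1⟩, hnA⟩
    exact ⟨hu, hv, (gamma_char b hb u v hu hv i).2 ⟨h1, fun he => hnA ⟨hu, hv, he⟩⟩⟩

lemma vol_inter_A (b j : ℕ) (hb : 2 ≤ b) (x y : ℝ) :
    (volume ((Set.Ico (0:ℝ) x ×ˢ Set.Ico (0:ℝ) y) ∩ Aset b j)).toReal = G b j x y := by
  have hbj : (0:ℝ) < (b:ℝ)^j := by positivity
  rw [Aset_eq_union b j hb, Set.inter_iUnion₂]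
  rw [measure_biUnion_finset]
  rotate_left
  · intro p _ q _ hne
    have hIdisj : Disjoint (Set.Ico ((p:ℝ)/(b:ℝ)^j) (((p:ℝ)+1)/(b:ℝ)^j))
        (Set.Ico ((q:ℝ)/(b:ℝ)^j) (((q:ℝ)+1)/(b:ℝ)^j)) := by
      rw [Set.Ico_disjoint_Ico]
      rcases lt_or_gt_of_ne hne with h | h
      · have hpq : (p:ℝ)+1 ≤ (q:ℝ) := by exact_mod_cast Nat.succ_le_of_lt h
        calc min (((p:ℝ)+1)/(b:ℝ)^j) (((q:ℝ)+1)/(b:ℝ)^j) ≤ ((p:ℝ)+1)/(b:ℝ)^j :=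
              min_le_left _ _
          _ ≤ (q:ℝ)/(b:ℝ)^j := div_le_div_of_nonneg_right hpq hbj.le
          _ ≤ max ((p:ℝ)/(b:ℝ)^j) ((q:ℝ)/(b:ℝ)^j) := le_max_right _ _
      · have hpq : (q:ℝ)+1 ≤ (p:ℝ) := by exact_mod_cast Nat.succ_le_of_lt h
        calc min (((p:ℝ)+1)/(b:ℝ)^j) (((q:ℝ)+1)/(b:ℝ)^j) ≤ ((q:ℝ)+1)/(b:ℝ)^j :=
              min_le_right _ _
          _ ≤ (p:ℝ)/(b:ℝ)^j := div_le_div_of_nonneg_right hpq hbj.le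
          _ ≤ max ((p:ℝ)/(b:ℝ)^j) ((q:ℝ)/(b:ℝ)^j) := le_max_left _ _
    exact Disjoint.mono Set.inter_subset_right Set.inter_subset_right
      (Set.Disjoint.set_prod_left hIdisj _ _)
  · intro p _
    exact (measurableSet_Ico.prod measurableSet_Ico).inter
      (measurableSet_Ico.prod measurableSet_Ico)
  · have hterm : ∀ p : ℕ, volume ((Set.Ico (0:ℝ) x ×ˢ Set.Ico (0:ℝ) y) ∩
        (Set.Ico ((p:ℝ)/(b:ℝ)^j) (((p:ℝ)+1)/(b:ℝ)^j)
          ×ˢ Set.Ico ((p:ℝ)/(b:ℝ)^j) (((p:ℝ)+1)/(b:ℝ)^j)))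
        = ENNReal.ofReal (cl x ((p:ℝ)/(b:ℝ)^j) (((p:ℝ)+1)/(b:ℝ)^j))
          * ENNReal.ofReal (cl y ((p:ℝ)/(b:ℝ)^j) (((p:ℝ)+1)/(b:ℝ)^j)) := by
      intro p
      rw [Set.prod_inter_prod, Measure.volume_eq_prod, Measure.prod_prod]
      rw [Set.Ico_inter_Ico, Set.Ico_inter_Ico]
      rw [max_eq_right (by positivity : (0:ℝ) ≤ (p:ℝ)/(b:ℝ)^j)]
      rw [Real.volume_Ico, Real.volume_Ico, ofReal_cl, ofReal_cl]
    rw [Finset.sum_congr rfl (fun p _ => hterm p)]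
    rw [ENNReal.toReal_sum (fun p _ => ENNReal.mul_ne_top ENNReal.ofReal_ne_top
      ENNReal.ofReal_ne_top)]
    unfold G
    apply Finset.sum_congr rfl
    intro p _
    rw [ENNReal.toReal_mul, ENNReal.toReal_ofReal (cl_nonneg _ _ _),
      ENNReal.toReal_ofReal (cl_nonneg _ _ _)]
    have e1 : (p:ℝ)/(b:ℝ)^j = (p:ℝ) * ((b:ℝ)^j)⁻¹ := div_eq_mul_inv _ _
    have e2 : ((p:ℝ)+1)/(b:ℝ)^j = (p:ℝ) * ((b:ℝ)^j)⁻¹ + ((b:ℝ)^j)⁻¹ := by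
      field_simp
    rw [e1, e2]

lemma vol_fin (x y : ℝ) (S : Set (ℝ × ℝ)) :
    volume ((Set.Ico (0:ℝ) x ×ˢ Set.Ico (0:ℝ) y) ∩ S) ≠ ⊤ := by
  apply ne_of_lt
  apply lt_of_le_of_lt (measure_mono Set.inter_subset_left)
  rw [Measure.volume_eq_prod, Measure.prod_prod, Real.volume_Ico, Real.volume_Ico]
  exact ENNReal.mul_lt_top ENNReal.ofReal_lt_top ENNReal.ofReal_lt_top

lemma Vi_eq (b i : ℕ) (hb : 2 ≤ b) (x y : ℝ) :
    Vi b i x y = G b i x y - G b (i+1) x y := by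
  rw [Vi, Dset_eq b i hb, Set.inter_diff_distrib_left]
  rw [measure_diff (Set.inter_subset_inter_right _ (Aset_sub b i hb))
    (((measurableSet_Ico.prod measurableSet_Ico).inter
      (Aset_meas b (i+1) hb)).nullMeasurableSet) (vol_fin x y _)]
  rw [ENNReal.toReal_sub_of_le (measure_mono (Set.inter_subset_inter_right _ (Aset_sub b i hb)))
    (vol_fin x y _)]
  rw [vol_inter_A b i hb, vol_inter_A b (i+1) hb]


theorem stmt2 (b : ℕ) (hb : 2 ≤ b) (x y : ℝ)
    (hx : x ∈ Set.Icc (0 : ℝ) 1) (hy : y ∈ Set.Icc (0 : ℝ) 1)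
    (i : ℕ) (hi : 1 ≤ i) :
    0 ≤ (b : ℝ) * Vi b i x y - Vi b (i - 1) x y := by
  obtain ⟨j, rfl⟩ : ∃ j, i = j + 1 := ⟨i - 1, by omega⟩
  rw [show j + 1 - 1 = j by omega]
  rw [Vi_eq b (j+1) hb x y, Vi_eq b j hb x y]
  have halg : (b:ℝ) * G b (j+2) x y + G b j x y ≤ ((b:ℝ)+1) * G b (j+1) x y := by
    rcases le_total x y with h | h
    · exact alg_main b hb j x y hx.1 h
    · rw [G_symm b (j+2) x y, G_symm b j x y, G_symm b (j+1) x y]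
      exact alg_main b hb j y x hy.1 h
  have he : j + 1 + 1 = j + 2 := rfl
  rw [he]
  linarith
end

section
/- Let b be a prime, m ≥ 1, and let P_n = (V_0,…,V_{b^m−1}) be the digital net in base b with generating matrices C_1,…,C_s ∈ F_b^{m×m}. Then for every k ∈ ℕ^s with k_j ≤ m for all j and every index l ∈ {0,…,b^m−1}, m_b(k;P_n,V_l) = b^{m−r(k)} − 1, where r(k) is the rank over F_b of the matrix formed by stacking the first k_j rows of C_j for j = 1,…,s. -/
open MeasureTheory
open scoped Classical

noncomputable def mB {n s : ℕ} (b : ℕ) (P : Fin n → Fin s → ℝ) (k : Fin s → ℕ) (l : Fin n) : ℕ :=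
  (Finset.univ.filter fun j : Fin n =>
    j ≠ l ∧ ∀ r : Fin s, (k r : ℕ∞) ≤ gammaB b (P l r) (P j r)).card

noncomputable def nB {n s : ℕ} (b : ℕ) (P : Fin n → Fin s → ℝ) (i : Fin s → ℕ) (l : Fin n) : ℕ :=
  (Finset.univ.filter fun j : Fin n =>
    j ≠ l ∧ ∀ r : Fin s, gammaB b (P l r) (P j r) = (i r : ℕ∞)).card

noncomputable def MB {n s : ℕ} (b : ℕ) (P : Fin n → Fin s → ℝ) (k : Fin s → ℕ) : ℕ :=
  ∑ l : Fin n, mB b P k l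

noncomputable def NB {n s : ℕ} (b : ℕ) (P : Fin n → Fin s → ℝ) (i : Fin s → ℕ) : ℕ :=
  ∑ l : Fin n, nB b P i l

noncomputable def CB {n s : ℕ} (b : ℕ) (P : Fin n → Fin s → ℝ) (k : Fin s → ℕ) : ℝ :=
  (b : ℝ) ^ (∑ j, k j) * (MB b P k : ℝ) / ((n : ℝ) * ((n : ℝ) - 1))

noncomputable def digitalNet (b m s : ℕ) (C : Fin s → Matrix (Fin m) (Fin m) (ZMod b)) :
    Fin (b ^ m) → Fin s → ℝ :=
  fun i ℓ => ∑ r : Fin m,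
    ((((C ℓ).mulVec fun p : Fin m => ((((i : ℕ) / b ^ (p : ℕ)) % b : ℕ) : ZMod b)) r).val : ℝ) /
      (b : ℝ) ^ ((r : ℕ) + 1)

noncomputable def stackRank (b m s : ℕ) (C : Fin s → Matrix (Fin m) (Fin m) (ZMod b))
    (k : Fin s → ℕ) (hk : ∀ j, k j ≤ m) : ℕ :=
  (Matrix.of fun (x : (j : Fin s) × Fin (k j)) (p : Fin m) =>
    C x.1 ⟨(x.2 : ℕ), lt_of_lt_of_le x.2.2 (hk x.1)⟩ p).rank

/-!
A real number with a finite base-`b` digit expansion `0.a₀a₁a₂…` satisfies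
`⌊bⁱ x⌋ = a₀a₁…a_{i-1}` (read in base `b`), so two such numbers lie in the same elementary
interval of level `k` exactly when their first `k` digits agree. For the digital net this means
that `V_j` lies in the elementary `k`-interval of `V_l` iff the stacked matrix `D` of the first
`k_r` rows of the `C_r` kills `digitVec j - digitVec l`. Since `i ↦ digitVec i` is a bijection
onto `𝔽_b^m`, the points counted correspond to the nonzero vectors of `ker D`, of which there are
`b ^ (m - rank D) - 1`.
-/

/-- The natural number whose base-`b` digits, most significant first, are `a 0, …, a (i - 1)`. -/
def digitPrefix (b : ℕ) (a : ℕ → ℕ) : ℕ → ℕ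
  | 0 => 0
  | i + 1 => b * digitPrefix b a i + a i

section Digits

variable {b : ℕ} {a a' : ℕ → ℕ}

theorem digitPrefix_eq_iff (ha : ∀ r, a r < b) (ha' : ∀ r, a' r < b) (i : ℕ) :
    digitPrefix b a i = digitPrefix b a' i ↔ ∀ r < i, a r = a' r := by
  induction i with
  | zero => simp [digitPrefix]
  | succ i ih =>
    have hb : 0 < b := (Nat.zero_le _).trans_lt (ha 0)
    simp only [digitPrefix]
    constructor
    · intro h
      have hlast : a i = a' i := by
        simpa [Nat.mul_add_mod, Nat.mod_eq_of_lt (ha i), Nat.mod_eq_of_lt (ha' i)]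
          using congrArg (· % b) h
      have hprefix : digitPrefix b a i = digitPrefix b a' i :=
        Nat.eq_of_mul_eq_mul_left hb (by omega)
      intro r hr
      rcases Nat.lt_succ_iff_lt_or_eq.mp hr with hr | rfl
      exacts [ih.1 hprefix r hr, hlast]
    · intro h
      rw [ih.2 fun r hr => h r (by omega), h i (by omega)]

theorem cast_digitPrefix (hb : 0 < b) (i : ℕ) :
    (digitPrefix b a i : ℝ)
      = (b : ℝ) ^ i * ∑ r ∈ Finset.range i, (a r : ℝ) / (b : ℝ) ^ (r + 1) := by
  induction i with
  | zero => simp [digitPrefix]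
  | succ i ih =>
    rw [digitPrefix, Finset.sum_range_succ, Nat.cast_add, Nat.cast_mul, ih]
    field_simp
    ring

theorem sum_Ico_digits_le (ha : ∀ r, a r < b) {i M : ℕ} (hiM : i ≤ M) :
    ∑ r ∈ Finset.Ico i M, (a r : ℝ) / (b : ℝ) ^ (r + 1)
      ≤ 1 / (b : ℝ) ^ i - 1 / (b : ℝ) ^ M := by
  have hb : (0 : ℝ) < b := by exact_mod_cast (Nat.zero_le _).trans_lt (ha 0)
  induction M, hiM using Nat.le_induction with
  | base => simp
  | succ M hiM ih =>
    have hdigit : (a M : ℝ) ≤ b - 1 := by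
      have : (a M : ℝ) + 1 ≤ b := by exact_mod_cast ha M
      linarith
    calc ∑ r ∈ Finset.Ico i (M + 1), (a r : ℝ) / (b : ℝ) ^ (r + 1)
        ≤ (1 / (b : ℝ) ^ i - 1 / (b : ℝ) ^ M) + ((b : ℝ) - 1) / (b : ℝ) ^ (M + 1) := by
          rw [Finset.sum_Ico_succ_top hiM]
          gcongr
      _ = 1 / (b : ℝ) ^ i - 1 / (b : ℝ) ^ (M + 1) := by
          field_simp
          ring

theorem floor_pow_mul_digitSum (ha : ∀ r, a r < b) {i M : ℕ} (hiM : i ≤ M) :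
    ⌊(b : ℝ) ^ i * ∑ r ∈ Finset.range M, (a r : ℝ) / (b : ℝ) ^ (r + 1)⌋
      = digitPrefix b a i := by
  have hb : 0 < b := (Nat.zero_le _).trans_lt (ha 0)
  have htail_nonneg :
      0 ≤ (b : ℝ) ^ i * ∑ r ∈ Finset.Ico i M, (a r : ℝ) / (b : ℝ) ^ (r + 1) := by
    positivity
  have htail_lt : (b : ℝ) ^ i * ∑ r ∈ Finset.Ico i M, (a r : ℝ) / (b : ℝ) ^ (r + 1) < 1 :=
    calc _ ≤ (b : ℝ) ^ i * (1 / (b : ℝ) ^ i - 1 / (b : ℝ) ^ M) := by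
          gcongr; exact sum_Ico_digits_le ha hiM
      _ = 1 - (b : ℝ) ^ i / (b : ℝ) ^ M := by field_simp
      _ < 1 := by linarith [show (0 : ℝ) < (b : ℝ) ^ i / (b : ℝ) ^ M by positivity]
  rw [Int.floor_eq_iff, ← Finset.sum_range_add_sum_Ico _ hiM, mul_add, ← cast_digitPrefix hb]
  push_cast
  constructor <;> linarith

theorem sum_range_digits_eq_of_le {m M : ℕ} (hz : ∀ r, m ≤ r → a r = 0) (hmM : m ≤ M) :
    ∑ r ∈ Finset.range m, (a r : ℝ) / (b : ℝ) ^ (r + 1)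
      = ∑ r ∈ Finset.range M, (a r : ℝ) / (b : ℝ) ^ (r + 1) :=
  Finset.sum_subset (Finset.range_subset_range.2 hmM) fun r _ hr => by
    simp [hz r (by simpa using hr)]

theorem floor_pow_mul_digitSum_eq_iff {m : ℕ} (ha : ∀ r, a r < b) (ha' : ∀ r, a' r < b)
    (hz : ∀ r, m ≤ r → a r = 0) (hz' : ∀ r, m ≤ r → a' r = 0) (i : ℕ) :
    ⌊(b : ℝ) ^ i * ∑ r ∈ Finset.range m, (a r : ℝ) / (b : ℝ) ^ (r + 1)⌋
        = ⌊(b : ℝ) ^ i * ∑ r ∈ Finset.range m, (a' r : ℝ) / (b : ℝ) ^ (r + 1)⌋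
      ↔ ∀ r < i, a r = a' r := by
  rw [sum_range_digits_eq_of_le hz (le_max_left m i),
    sum_range_digits_eq_of_le hz' (le_max_left m i), floor_pow_mul_digitSum ha (le_max_right m i),
    floor_pow_mul_digitSum ha' (le_max_right m i),
    Nat.cast_inj, digitPrefix_eq_iff ha ha']

theorem le_gammaB_digitSum_iff {m : ℕ} (ha : ∀ r, a r < b) (ha' : ∀ r, a' r < b)
    (hz : ∀ r, m ≤ r → a r = 0) (hz' : ∀ r, m ≤ r → a' r = 0) (k : ℕ) :
    (k : ℕ∞) ≤ gammaB b (∑ r ∈ Finset.range m, (a r : ℝ) / (b : ℝ) ^ (r + 1))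
        (∑ r ∈ Finset.range m, (a' r : ℝ) / (b : ℝ) ^ (r + 1))
      ↔ ∀ r < k, a r = a' r := by
  have hfloor := floor_pow_mul_digitSum_eq_iff ha ha' hz hz'
  by_cases hall : ∀ r, a r = a' r
  · simp [gammaB, hall]
  simp only [not_forall] at hall
  have hne : ∑ r ∈ Finset.range m, (a r : ℝ) / (b : ℝ) ^ (r + 1)
      ≠ ∑ r ∈ Finset.range m, (a' r : ℝ) / (b : ℝ) ^ (r + 1) := by
    obtain ⟨r, hr⟩ := hall
    exact fun h => hr ((hfloor (r + 1)).1 (by rw [h]) r (Nat.lt_succ_self r))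
  have hfirst :
      {i : ℕ | (∀ r < i, a r = a' r) ∧ ¬∀ r < i + 1, a r = a' r} = {Nat.find hall} := by
    ext i
    simp only [Set.mem_ofPred_eq, Set.mem_singleton_iff, eq_comm (a := i), Nat.find_eq_iff,
      Nat.lt_succ_iff_lt_or_eq, or_imp, forall_and, forall_eq, not_not]
    tauto
  simp only [gammaB, if_neg hne, hfloor, ne_eq, hfirst, csInf_singleton, Nat.cast_le,
    Nat.le_find_iff, not_not]

end Digits

section FinDigits

variable {b m : ℕ} [NeZero b]

theorem le_gammaB_finDigitSum_iff (u v : Fin m → ZMod b) (k : ℕ) :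
    (k : ℕ∞) ≤ gammaB b (∑ r : Fin m, ((u r).val : ℝ) / (b : ℝ) ^ ((r : ℕ) + 1))
        (∑ r : Fin m, ((v r).val : ℝ) / (b : ℝ) ^ ((r : ℕ) + 1))
      ↔ ∀ t : Fin m, (t : ℕ) < k → u t = v t := by
  let extend (w : Fin m → ZMod b) (t : ℕ) : ℕ := if h : t < m then (w ⟨t, h⟩).val else 0
  have hlt (w : Fin m → ZMod b) (t : ℕ) : extend w t < b := by
    unfold extend; split
    · exact ZMod.val_lt _
    · exact Nat.pos_of_neZero b
  have hzero (w : Fin m → ZMod b) (t : ℕ) (ht : m ≤ t) : extend w t = 0 := dif_neg (by omega)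
  have hsum (w : Fin m → ZMod b) : ∑ r : Fin m, ((w r).val : ℝ) / (b : ℝ) ^ ((r : ℕ) + 1)
      = ∑ t ∈ Finset.range m, (extend w t : ℝ) / (b : ℝ) ^ (t + 1) := by
    rw [← Fin.sum_univ_eq_sum_range (fun t => (extend w t : ℝ) / (b : ℝ) ^ (t + 1))]
    simp [extend]
  rw [hsum, hsum, le_gammaB_digitSum_iff (hlt u) (hlt v) (hzero u) (hzero v)]
  constructor
  · intro h t ht
    exact ZMod.val_injective b (by simpa [extend] using h t ht)
  · intro h t ht
    unfold extend
    split_ifs with htm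
    · rw [h ⟨t, htm⟩ ht]
    · rfl

end FinDigits

/-- The base-`b` digits of `i`, least significant first. -/
def digitVec (b m : ℕ) (i : Fin (b ^ m)) : Fin m → ZMod b :=
  fun p => (((i : ℕ) / b ^ (p : ℕ) % b : ℕ) : ZMod b)

theorem digitVec_bijective (b m : ℕ) [NeZero b] : Function.Bijective (digitVec b m) := by
  refine (Fintype.bijective_iff_injective_and_card _).2 ⟨fun i j h => ?_, by simp⟩
  apply finFunctionFinEquiv.symm.injective
  funext p
  have hp := congrArg ZMod.val (congrFun h p)
  simp only [digitVec, ZMod.val_natCast, Nat.mod_mod] at hp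
  exact Fin.ext (by simpa using hp)

theorem card_filter_ne_and_sub_mem {α V : Type*} [Fintype α] [DecidableEq α] [AddGroup V]
    {φ : α → V} (hφ : Function.Bijective φ) {W : Set V} (hW : 0 ∈ W) (l : α) :
    (Finset.univ.filter fun j => j ≠ l ∧ φ j - φ l ∈ W).card = Nat.card W - 1 := by
  let ψ : α ≃ V := (Equiv.ofBijective φ hφ).trans (Equiv.subRight (φ l))
  have : Fintype V := Fintype.ofEquiv α ψ
  have hψ (j : α) : j ≠ l ↔ ψ j ≠ 0 := by simp [ψ, sub_eq_zero, hφ.1.eq_iff]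
  calc (Finset.univ.filter fun j => j ≠ l ∧ φ j - φ l ∈ W).card
      = (Finset.univ.filter fun v : V => v ≠ 0 ∧ v ∈ W).card := by
        rw [← Fintype.card_subtype, ← Fintype.card_subtype]
        exact Fintype.card_congr (ψ.subtypeEquiv fun j => by rw [hψ]; rfl)
    _ = ((Finset.univ.filter fun v : V => v ∈ W).erase 0).card := by
        congr 1; ext v; simp [and_comm]
    _ = Nat.card W - 1 := by
        rw [Finset.card_erase_of_mem (by simpa using hW), ← Fintype.card_subtype,
          Nat.card_eq_fintype_card]

theorem natCard_ker_mulVecLin {K ι n : Type*} [Field K] [Fintype K] [Fintype ι] [Fintype n]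
    (D : Matrix ι n K) :
    Nat.card (LinearMap.ker D.mulVecLin) = Fintype.card K ^ (Fintype.card n - D.rank) := by
  have hrank : D.rank + Module.finrank K (LinearMap.ker D.mulVecLin) = Fintype.card n := by
    rw [Matrix.rank, LinearMap.finrank_range_add_finrank_ker, Module.finrank_fintype_fun_eq_card]
  rw [Module.natCard_eq_pow_finrank (K := K), Nat.card_eq_fintype_card]
  congr 1
  omega

def stackMatrix {b m s : ℕ} (C : Fin s → Matrix (Fin m) (Fin m) (ZMod b)) (k : Fin s → ℕ)
    (hk : ∀ j, k j ≤ m) : Matrix ((j : Fin s) × Fin (k j)) (Fin m) (ZMod b) :=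
  Matrix.of fun x p => C x.1 ⟨(x.2 : ℕ), lt_of_lt_of_le x.2.2 (hk x.1)⟩ p

theorem stackRank_eq_rank_stackMatrix (b m s : ℕ) (C : Fin s → Matrix (Fin m) (Fin m) (ZMod b))
    (k : Fin s → ℕ) (hk : ∀ j, k j ≤ m) :
    stackRank b m s C k hk = (stackMatrix C k hk).rank :=
  rfl

theorem mem_ker_stackMatrix_iff {b m s : ℕ} (C : Fin s → Matrix (Fin m) (Fin m) (ZMod b))
    (k : Fin s → ℕ) (hk : ∀ j, k j ≤ m) (v : Fin m → ZMod b) :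
    v ∈ LinearMap.ker (stackMatrix C k hk).mulVecLin
      ↔ ∀ j, ∀ t : Fin m, (t : ℕ) < k j → (C j).mulVec v t = 0 := by
  simp only [LinearMap.mem_ker, Matrix.mulVecLin_apply, funext_iff, Sigma.forall, Pi.zero_apply]
  exact forall_congr' fun j =>
    ⟨fun h t ht => h ⟨t, ht⟩, fun h t => h ⟨t, (hk j).trans_lt' t.2⟩ t.2⟩

theorem le_gammaB_digitalNet_iff {b m s : ℕ} [NeZero b]
    (C : Fin s → Matrix (Fin m) (Fin m) (ZMod b)) (k : Fin s → ℕ) (hk : ∀ j, k j ≤ m)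
    (i l : Fin (b ^ m)) :
    (∀ j, (k j : ℕ∞) ≤ gammaB b (digitalNet b m s C l j) (digitalNet b m s C i j))
      ↔ digitVec b m i - digitVec b m l
          ∈ (LinearMap.ker (stackMatrix C k hk).mulVecLin : Set (Fin m → ZMod b)) := by
  simp only [SetLike.mem_coe, mem_ker_stackMatrix_iff, Matrix.mulVec_sub, Pi.sub_apply, sub_eq_zero]
  exact forall_congr' fun j => (le_gammaB_finDigitSum_iff _ _ (k j)).trans <|
    forall_congr' fun _ => forall_congr' fun _ => eq_comm

theorem stmt4_general (b m s : ℕ) [Fact (Nat.Prime b)]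
    (C : Fin s → Matrix (Fin m) (Fin m) (ZMod b))
    (k : Fin s → ℕ) (hk : ∀ j, k j ≤ m) (l : Fin (b ^ m)) :
    mB b (digitalNet b m s C) k l = b ^ (m - stackRank b m s C k hk) - 1 := by
  rw [mB, Finset.filter_congr fun i _ => and_congr_right_iff.2 fun _ =>
      le_gammaB_digitalNet_iff C k hk i l,
    card_filter_ne_and_sub_mem (digitVec_bijective b m) (zero_mem _),
    SetLike.coe_sort_coe, natCard_ker_mulVecLin, ZMod.card, Fintype.card_fin,
    stackRank_eq_rank_stackMatrix]

theorem stmt4 (b m s : ℕ) [Fact (Nat.Prime b)] (hm : 1 ≤ m)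
    (C : Fin s → Matrix (Fin m) (Fin m) (ZMod b))
    (k : Fin s → ℕ) (hk : ∀ j, k j ≤ m) (l : Fin (b ^ m)) :
    mB b (digitalNet b m s C) k l = b ^ (m - stackRank b m s C k hk) - 1 :=
  stmt4_general b m s C k hk l
end

section
/- Let b ≥ 2, m ≥ 0, and let P_n be a (0,m,s)-net in base b (so n = b^m). Then for every k ∈ ℕ^s and every index l ∈ {1,…,n}, m_b(k;P_n,V_l) = max(b^{m−|k|} − 1, 0), where |k| = k_1 + … + k_s. -/
open MeasureTheory
open scoped Classical

def ElemInterval (b s : ℕ) (k a : Fin s → ℕ) : Set (Fin s → ℝ) :=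
  {x | ∀ j : Fin s, (a j : ℝ) / (b : ℝ) ^ k j ≤ x j ∧ x j < ((a j : ℝ) + 1) / (b : ℝ) ^ k j}

def kEquidistributed (b m : ℕ) {n s : ℕ} (P : Fin n → Fin s → ℝ) (k : Fin s → ℕ) : Prop :=
  ∀ a : Fin s → ℕ, (∀ j, a j < b ^ k j) →
    (Finset.univ.filter fun i : Fin n => P i ∈ ElemInterval b s k a).card = b ^ (m - ∑ j, k j)

/-- If the floors of `n*u` and `n*v` agree (`n` a positive natural), so do those of `u`, `v`. -/
lemma floor_eq_of_floor_natmul_eq {n : ℕ} (hn : 0 < n) {u v : ℝ}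
    (h : ⌊(n : ℝ) * u⌋ = ⌊(n : ℝ) * v⌋) : ⌊u⌋ = ⌊v⌋ := by
  have key : ∀ p q : ℝ, ⌊(n : ℝ) * p⌋ = ⌊(n : ℝ) * q⌋ → ⌊p⌋ ≤ ⌊q⌋ := by
    intro p q hpq
    have hn' : (0 : ℝ) < n := by exact_mod_cast hn
    have h1 : ((n : ℤ) * ⌊p⌋ : ℤ) ≤ ⌊(n : ℝ) * p⌋ := by
      rw [Int.le_floor]
      push_cast
      exact mul_le_mul_of_nonneg_left (Int.floor_le p) hn'.le
    have h3 : ((n : ℝ) * (⌊p⌋ : ℝ)) < (n : ℝ) * ((⌊q⌋ : ℝ) + 1) := by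
      calc ((n : ℝ) * (⌊p⌋ : ℝ)) ≤ (⌊(n : ℝ) * p⌋ : ℝ) := by exact_mod_cast h1
        _ = (⌊(n : ℝ) * q⌋ : ℝ) := by exact_mod_cast hpq
        _ ≤ (n : ℝ) * q := Int.floor_le _
        _ < _ := by
            have := Int.lt_floor_add_one q
            nlinarith [Int.lt_floor_add_one q]
    have h4 : (⌊p⌋ : ℝ) < (⌊q⌋ : ℝ) + 1 := lt_of_mul_lt_mul_left h3 hn'.le
    have : ⌊p⌋ < ⌊q⌋ + 1 := by exact_mod_cast h4
    omega
  exact le_antisymm (key _ _ h) (key _ _ h.symm)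

lemma agree_of_agree_succ {b : ℕ} (hb : 0 < b) (x y : ℝ) (i : ℕ)
    (h : ⌊(b : ℝ) ^ (i + 1) * x⌋ = ⌊(b : ℝ) ^ (i + 1) * y⌋) :
    ⌊(b : ℝ) ^ i * x⌋ = ⌊(b : ℝ) ^ i * y⌋ := by
  apply floor_eq_of_floor_natmul_eq hb
  have e : ∀ z : ℝ, (b : ℝ) * ((b : ℝ) ^ i * z) = (b : ℝ) ^ (i + 1) * z := by
    intro z; ring
  rw [e, e, h]

lemma agree_anti {b : ℕ} (hb : 0 < b) (x y : ℝ) {i j : ℕ} (hij : i ≤ j)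
    (h : ⌊(b : ℝ) ^ j * x⌋ = ⌊(b : ℝ) ^ j * y⌋) :
    ⌊(b : ℝ) ^ i * x⌋ = ⌊(b : ℝ) ^ i * y⌋ := by
  induction j with
  | zero => have : i = 0 := Nat.le_zero.mp hij; subst this; exact h
  | succ j ih =>
    rcases Nat.lt_or_ge i (j + 1) with hlt | hge
    · exact ih (by omega) (agree_of_agree_succ hb x y j h)
    · have : i = j + 1 := by omega
      subst this; exact h

lemma gammaB_ge_iff {b : ℕ} (hb : 2 ≤ b) {x y : ℝ} (hx : x ∈ Set.Ico (0 : ℝ) 1)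
    (hy : y ∈ Set.Ico (0 : ℝ) 1) (k : ℕ) :
    (k : ℕ∞) ≤ gammaB b x y ↔ ⌊(b : ℝ) ^ k * x⌋ = ⌊(b : ℝ) ^ k * y⌋ := by
  by_cases hxy : x = y
  · subst hxy; simp [gammaB]
  · unfold gammaB
    rw [if_neg hxy, Nat.cast_le]
    have hb0 : 0 < b := by omega
    have hb1 : (1 : ℝ) < b := by exact_mod_cast (by omega : 1 < b)
    set A : ℕ → Prop := fun i => ⌊(b : ℝ) ^ i * x⌋ = ⌊(b : ℝ) ^ i * y⌋ with hA
    have hanti : ∀ {i j : ℕ}, i ≤ j → A j → A i := fun hij h => agree_anti hb0 x y hij h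
    have hA0 : A 0 := by
      show ⌊(b : ℝ) ^ 0 * x⌋ = ⌊(b : ℝ) ^ 0 * y⌋
      rw [pow_zero, one_mul, one_mul, Int.floor_eq_zero_iff.mpr hx, Int.floor_eq_zero_iff.mpr hy]
    have hNA : ∃ i, ¬ A i := by
      have hd : 0 < |x - y| := abs_pos.mpr (sub_ne_zero.mpr hxy)
      obtain ⟨i, hi⟩ := pow_unbounded_of_one_lt (1 / |x - y|) hb1
      refine ⟨i, fun hAi => ?_⟩
      have hb' : (0 : ℝ) < (b : ℝ) ^ i := by positivity
      have h1 : (b : ℝ) ^ i * x - (b : ℝ) ^ i * y < 1 := by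
        have h2 := Int.lt_floor_add_one ((b : ℝ) ^ i * x)
        have h3 := Int.floor_le ((b : ℝ) ^ i * y)
        rw [hAi] at h2
        linarith
      have h1' : (b : ℝ) ^ i * y - (b : ℝ) ^ i * x < 1 := by
        have h2 := Int.lt_floor_add_one ((b : ℝ) ^ i * y)
        have h3 := Int.floor_le ((b : ℝ) ^ i * x)
        rw [← hAi] at h2
        linarith
      have h5 : 1 < (b : ℝ) ^ i * |x - y| := by
        rw [div_lt_iff₀ hd] at hi
        linarith
      have h6 : (b : ℝ) ^ i * |x - y| = |(b : ℝ) ^ i * x - (b : ℝ) ^ i * y| := by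
        rw [← mul_sub, abs_mul, abs_of_pos hb']
      rw [h6] at h5
      rcases abs_lt.mp (show |(b : ℝ) ^ i * x - (b : ℝ) ^ i * y| < 1 from
        abs_lt.mpr ⟨by linarith, h1⟩) with ⟨_, _⟩
      linarith [abs_lt.mpr (⟨by linarith, h1⟩ : -1 < (b : ℝ) ^ i * x - (b : ℝ) ^ i * y ∧ _)]
    set N := sInf {i | ¬ A i} with hNdef
    have hNmem : ¬ A N := Nat.sInf_mem hNA
    have hNpos : 0 < N := by
      rcases Nat.eq_zero_or_pos N with h0 | h0
      · exact absurd (h0 ▸ hA0) hNmem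
      · exact h0
    have hltN : ∀ i, i < N → A i := by
      intro i hi
      by_contra h
      exact absurd (Nat.sInf_le h) (Nat.not_le.mpr hi)
    have hSmem : (N - 1) ∈ {i : ℕ | A i ∧ ¬ A (i + 1)} := by
      constructor
      · exact hltN _ (by omega)
      · have he : N - 1 + 1 = N := by omega
        rw [he]; exact hNmem
    constructor
    · intro hk
      by_contra hAk
      have hNk : N ≤ k := Nat.sInf_le hAk
      have hs : sInf {i : ℕ | ⌊(b : ℝ) ^ i * x⌋ = ⌊(b : ℝ) ^ i * y⌋ ∧
          ⌊(b : ℝ) ^ (i + 1) * x⌋ ≠ ⌊(b : ℝ) ^ (i + 1) * y⌋} ≤ N - 1 := Nat.sInf_le hSmem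
      omega
    · intro hAk
      refine le_csInf ⟨_, hSmem⟩ ?_
      intro i hi
      by_contra hik
      push_neg at hik
      exact hi.2 (hanti (by omega : i + 1 ≤ k) hAk)

lemma mem_interval_iff {b : ℕ} (hb : 0 < b) (y : ℝ) (kk : ℕ) (a : ℤ) :
    ((a : ℝ) / (b : ℝ) ^ kk ≤ y ∧ y < ((a : ℝ) + 1) / (b : ℝ) ^ kk) ↔
      ⌊(b : ℝ) ^ kk * y⌋ = a := by
  have hp : (0 : ℝ) < (b : ℝ) ^ kk := by positivity
  rw [div_le_iff₀ hp, lt_div_iff₀ hp, Int.floor_eq_iff]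
  constructor
  · rintro ⟨h1, h2⟩
    constructor
    · linarith [mul_comm y ((b : ℝ) ^ kk)]
    · push_cast
      linarith [mul_comm y ((b : ℝ) ^ kk)]
  · rintro ⟨h1, h2⟩
    push_cast at h2
    constructor
    · linarith [mul_comm y ((b : ℝ) ^ kk)]
    · linarith [mul_comm y ((b : ℝ) ^ kk)]

lemma exists_le_sum {s : ℕ} : ∀ (N : ℕ) (k : Fin s → ℕ), ∑ j, k j = N → ∀ m, m ≤ N →
    ∃ k' : Fin s → ℕ, (∀ j, k' j ≤ k j) ∧ ∑ j, k' j = m := by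
  intro N
  induction N with
  | zero =>
    intro k hk m hm
    exact ⟨k, fun j => le_rfl, by omega⟩
  | succ N ih =>
    intro k hk m hm
    rcases eq_or_lt_of_le hm with rfl | hm'
    · exact ⟨k, fun j => le_rfl, hk⟩
    · have hex : ∃ j, 0 < k j := by
        by_contra h
        push_neg at h
        have : ∑ j, k j = 0 := Finset.sum_eq_zero (fun j _ => by have := h j; omega)
        omega
      obtain ⟨j0, hj0⟩ := hex
      have hsum2 : ∑ j, Function.update k j0 (k j0 - 1) j = N := by
        rw [← Finset.add_sum_erase _ _ (Finset.mem_univ j0), Function.update_self]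
        have he : ∑ x ∈ Finset.univ.erase j0, Function.update k j0 (k j0 - 1) x
            = ∑ x ∈ Finset.univ.erase j0, k x :=
          Finset.sum_congr rfl (fun x hx =>
            Function.update_of_ne (Finset.ne_of_mem_erase hx) _ _)
        rw [he]
        have h2 := Finset.add_sum_erase Finset.univ k (Finset.mem_univ j0)
        omega
      obtain ⟨k', hle, hs⟩ := ih (Function.update k j0 (k j0 - 1)) hsum2 m (by omega)
      refine ⟨k', fun j => le_trans (hle j) ?_, hs⟩
      by_cases hj : j = j0
      · subst hj; rw [Function.update_self]; omega
      · rw [Function.update_of_ne hj]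

lemma mB_eq_of_le (b m s : ℕ) (hb : 2 ≤ b)
    (P : Fin (b ^ m) → Fin s → ℝ) (hP : ∀ i j, P i j ∈ Set.Ico (0 : ℝ) 1)
    (hnet : ∀ k : Fin s → ℕ, ∑ j, k j ≤ m → kEquidistributed b m P k)
    (k : Fin s → ℕ) (hk : ∑ j, k j ≤ m) (l : Fin (b ^ m)) :
    mB b P k l = b ^ (m - ∑ j, k j) - 1 := by
  classical
  have hb0 : 0 < b := by omega
  set a : Fin s → ℕ := fun r => (⌊(b : ℝ) ^ (k r) * P l r⌋).toNat with ha
  have hfloor_nonneg : ∀ r, (0 : ℤ) ≤ ⌊(b : ℝ) ^ (k r) * P l r⌋ := by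
    intro r
    apply Int.floor_nonneg.mpr
    have := (hP l r).1
    positivity
  have hacast : ∀ r, ((a r : ℤ)) = ⌊(b : ℝ) ^ (k r) * P l r⌋ := fun r =>
    Int.toNat_of_nonneg (hfloor_nonneg r)
  have halt : ∀ r, a r < b ^ (k r) := by
    intro r
    have hlt : ⌊(b : ℝ) ^ (k r) * P l r⌋ < (b : ℤ) ^ (k r) := by
      rw [Int.floor_lt]
      push_cast
      have h2 := (hP l r).2
      have hp : (0 : ℝ) < (b : ℝ) ^ (k r) := by positivity
      nlinarith
    have h2 : (a r : ℤ) < (b : ℤ) ^ (k r) := (hacast r) ▸ hlt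
    exact_mod_cast h2
  have hmem : ∀ j : Fin (b ^ m), (P j ∈ ElemInterval b s k a ↔
      ∀ r, ⌊(b : ℝ) ^ (k r) * P l r⌋ = ⌊(b : ℝ) ^ (k r) * P j r⌋) := by
    intro j
    unfold ElemInterval
    rw [Set.mem_setOf_eq]
    apply forall_congr'
    intro r
    have : ((a r : ℝ)) = ((a r : ℤ) : ℝ) := by push_cast; ring
    rw [this, mem_interval_iff hb0 (P j r) (k r) (a r : ℤ), hacast r, eq_comm]
  have hcond : ∀ j : Fin (b ^ m),
      ((∀ r, (k r : ℕ∞) ≤ gammaB b (P l r) (P j r)) ↔ P j ∈ ElemInterval b s k a) := by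
    intro j
    rw [hmem j]
    apply forall_congr'
    intro r
    exact gammaB_ge_iff hb (hP l r) (hP j r) (k r)
  have hfilter : (Finset.univ.filter fun j : Fin (b ^ m) =>
        j ≠ l ∧ ∀ r, (k r : ℕ∞) ≤ gammaB b (P l r) (P j r))
      = (Finset.univ.filter fun j : Fin (b ^ m) => P j ∈ ElemInterval b s k a).erase l := by
    ext j
    simp only [Finset.mem_erase, Finset.mem_filter, Finset.mem_univ, true_and]
    rw [hcond j]
  have hl : l ∈ Finset.univ.filter fun j : Fin (b ^ m) => P j ∈ ElemInterval b s k a := by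
    rw [Finset.mem_filter]
    exact ⟨Finset.mem_univ l, (hmem l).mpr (fun r => rfl)⟩
  have hcard := hnet k hk a halt
  rw [mB, hfilter, Finset.card_erase_of_mem hl, hcard]

theorem stmt5 (b m s : ℕ) (hb : 2 ≤ b)
    (P : Fin (b ^ m) → Fin s → ℝ) (hP : ∀ i j, P i j ∈ Set.Ico (0 : ℝ) 1)
    (hnet : ∀ k : Fin s → ℕ, ∑ j, k j ≤ m → kEquidistributed b m P k)
    (k : Fin s → ℕ) (l : Fin (b ^ m)) :
    (mB b P k l : ℝ) = max ((b : ℝ) ^ ((m : ℤ) - (∑ j, k j : ℕ)) - 1) 0 := by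
  have hb1 : (1 : ℝ) < b := by exact_mod_cast (by omega : 1 < b)
  rcases le_or_gt (∑ j, k j) m with h | h
  · rw [mB_eq_of_le b m s hb P hP hnet k h l]
    have hz : (b : ℝ) ^ ((m : ℤ) - (∑ j, k j : ℕ)) = (b : ℝ) ^ (m - ∑ j, k j : ℕ) := by
      rw [← zpow_natCast]
      congr 1
      omega
    have h1 : (1 : ℝ) ≤ (b : ℝ) ^ (m - ∑ j, k j : ℕ) := one_le_pow₀ hb1.le
    rw [hz, max_eq_left (by linarith)]
    have hble : 1 ≤ b ^ (m - ∑ j, k j) := Nat.one_le_pow _ _ (by omega)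
    rw [Nat.cast_sub hble]
    push_cast
    ring
  · obtain ⟨k', hk'le, hk'sum⟩ := exists_le_sum (∑ j, k j) k rfl m h.le
    have h0 : mB b P k' l = 0 := by
      rw [mB_eq_of_le b m s hb P hP hnet k' (le_of_eq hk'sum) l, hk'sum]
      simp
    have hsub : mB b P k l ≤ mB b P k' l := by
      apply Finset.card_le_card
      intro j hj
      simp only [Finset.mem_filter, Finset.mem_univ, true_and] at hj ⊢
      refine ⟨hj.1, fun r => le_trans ?_ (hj.2 r)⟩
      exact_mod_cast Nat.cast_le.mpr (hk'le r)
    have hzero : mB b P k l = 0 := by omega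
    rw [hzero]
    have hneg : ((m : ℤ) - (∑ j, k j : ℕ)) < 0 := by
      have : (m : ℤ) < (∑ j, k j : ℕ) := by exact_mod_cast h
      omega
    have hlt : (b : ℝ) ^ ((m : ℤ) - (∑ j, k j : ℕ)) < 1 := zpow_lt_one_of_neg₀ hb1 hneg
    rw [max_eq_right (by linarith)]
    simp
end

section
/- Let b ≥ 2, m ≥ 1, and let P_n be any set of n = b^m points in [0,1)^s. Then for every k ∈ ℕ^s with |k| ≤ m, P_n is k-equidistributed in base b if and only if C_b(k;P_n) = b^{|k|}·(b^{m−|k|} − 1)/(b^m − 1). -/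
open MeasureTheory
open scoped Classical

/-! ### Auxiliary lemmas -/

lemma myFloorDiv (t : ℝ) (n : ℕ) (hn : 0 < n) : ⌊t / (n : ℝ)⌋ = ⌊t⌋ / (n : ℤ) := by
  have hn' : (0:ℤ) < (n:ℤ) := by exact_mod_cast hn
  have hnR : (0:ℝ) < (n:ℝ) := by exact_mod_cast hn
  apply le_antisymm
  · rw [Int.le_ediv_iff_mul_le hn', Int.le_floor]
    push_cast
    calc (⌊t / (n:ℝ)⌋ : ℝ) * n ≤ (t / n) * n := by
          have := Int.floor_le (t / (n:ℝ)); nlinarith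
      _ = t := by field_simp
  · rw [Int.le_floor, le_div_iff₀ hnR]
    calc ((⌊t⌋ / (n:ℤ) : ℤ) : ℝ) * (n:ℝ) = ((⌊t⌋ / (n:ℤ) * (n:ℤ) : ℤ) : ℝ) := by push_cast; ring
      _ ≤ (⌊t⌋ : ℝ) := by exact_mod_cast Int.ediv_mul_le ⌊t⌋ (by omega)
      _ ≤ t := Int.floor_le t

lemma gamma_le_iff {b : ℕ} (hb : 2 ≤ b) {x y : ℝ}
    (hx : x ∈ Set.Ico (0:ℝ) 1) (hy : y ∈ Set.Ico (0:ℝ) 1) (kk : ℕ) :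
    ((kk : ℕ∞) ≤ gammaB b x y) ↔ ⌊(b:ℝ)^kk * x⌋ = ⌊(b:ℝ)^kk * y⌋ := by
  by_cases hxy : x = y
  · subst hxy; simp [gammaB]
  have hb1 : (1:ℝ) < (b:ℝ) := by exact_mod_cast (by omega : 1 < b)
  have hdown : ∀ i, ⌊(b:ℝ)^(i+1) * x⌋ = ⌊(b:ℝ)^(i+1) * y⌋ →
      ⌊(b:ℝ)^i * x⌋ = ⌊(b:ℝ)^i * y⌋ := by
    intro i h
    have hbne : (b:ℝ) ≠ 0 := by positivity
    have hx' : (b:ℝ)^i * x = ((b:ℝ)^(i+1) * x) / b := by field_simp; ring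
    have hy' : (b:ℝ)^i * y = ((b:ℝ)^(i+1) * y) / b := by field_simp; ring
    rw [hx', hy', myFloorDiv _ b (by omega), myFloorDiv _ b (by omega), h]
  have hfail : ∃ i, ¬ (⌊(b:ℝ)^i * x⌋ = ⌊(b:ℝ)^i * y⌋) := by
    obtain ⟨i, hi⟩ := pow_unbounded_of_one_lt (1 / |x - y|) hb1
    refine ⟨i, fun h => ?_⟩
    have habs : |x - y| > 0 := abs_pos.2 (sub_ne_zero.2 hxy)
    have h2 : (1:ℝ) < (b:ℝ)^i * |x - y| := by
      rw [div_lt_iff₀ habs] at hi; linarith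
    have h3 : |(b:ℝ)^i * x - (b:ℝ)^i * y| < 1 := by
      have f1 := Int.floor_le ((b:ℝ)^i * x)
      have f2 := Int.lt_floor_add_one ((b:ℝ)^i * x)
      have f3 := Int.floor_le ((b:ℝ)^i * y)
      have f4 := Int.lt_floor_add_one ((b:ℝ)^i * y)
      rw [h] at f1 f2
      rw [abs_sub_lt_iff]
      constructor <;> linarith
    rw [← mul_sub, abs_mul, abs_of_pos (by positivity : (0:ℝ) < (b:ℝ)^i)] at h3
    linarith
  set N := Nat.find hfail with hNdef
  have hN : ¬ (⌊(b:ℝ)^N * x⌋ = ⌊(b:ℝ)^N * y⌋) := Nat.find_spec hfail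
  have hA0 : ⌊(b:ℝ)^0 * x⌋ = ⌊(b:ℝ)^0 * y⌋ := by
    simp only [pow_zero, one_mul]
    rw [Int.floor_eq_zero_iff.2 hx, Int.floor_eq_zero_iff.2 hy]
  have hNpos : 0 < N := by
    rcases Nat.eq_zero_or_pos N with h | h
    · exact absurd (h ▸ hA0) hN
    · exact h
  have hup : ∀ i, N ≤ i → ¬ (⌊(b:ℝ)^i * x⌋ = ⌊(b:ℝ)^i * y⌋) := by
    intro i hi
    induction i, hi using Nat.le_induction with
    | base => exact hN
    | succ j hj ih => exact fun h => ih (hdown j h)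
  have hlt : ∀ i, (⌊(b:ℝ)^i * x⌋ = ⌊(b:ℝ)^i * y⌋) ↔ i < N := by
    intro i
    constructor
    · intro h; by_contra hcon; push_neg at hcon; exact hup i hcon h
    · intro h; exact not_not.1 (Nat.find_min hfail h)
  have hset : {i : ℕ | ⌊(b : ℝ) ^ i * x⌋ = ⌊(b : ℝ) ^ i * y⌋ ∧
      ⌊(b : ℝ) ^ (i + 1) * x⌋ ≠ ⌊(b : ℝ) ^ (i + 1) * y⌋} = {N - 1} := by
    ext i
    simp only [Set.mem_setOf_eq, Set.mem_singleton_iff]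
    constructor
    · rintro ⟨h1, h2⟩
      have e1 := (hlt i).1 h1
      have e2 : ¬ (i + 1 < N) := fun hc => h2 ((hlt (i+1)).2 hc)
      omega
    · intro h; subst h
      refine ⟨(hlt _).2 (by omega), fun hcon => ?_⟩
      have := (hlt _).1 hcon; omega
  rw [gammaB, if_neg hxy, hset, csInf_singleton, Nat.cast_le, hlt kk]
  omega

lemma mem_elem_iff {b s : ℕ} (hb : 2 ≤ b) (k a : Fin s → ℕ) (x : Fin s → ℝ) :
    x ∈ ElemInterval b s k a ↔ ∀ r, ⌊(b:ℝ)^(k r) * x r⌋ = (a r : ℤ) := by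
  have hb0 : (0:ℝ) < (b:ℝ) := by positivity
  simp only [ElemInterval, Set.mem_setOf_eq]
  refine forall_congr' fun r => ?_
  have hbp : (0:ℝ) < (b:ℝ)^(k r) := by positivity
  constructor
  · rintro ⟨h1, h2⟩
    rw [div_le_iff₀ hbp] at h1
    rw [lt_div_iff₀ hbp] at h2
    rw [Int.floor_eq_iff]
    push_cast
    constructor <;> nlinarith
  · intro h
    rw [Int.floor_eq_iff] at h
    push_cast at h
    rw [div_le_iff₀ hbp, lt_div_iff₀ hbp]
    constructor <;> nlinarith [h.1, h.2]

theorem stmt7 (b m s : ℕ) (hb : 2 ≤ b) (hm : 1 ≤ m)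
    (P : Fin (b ^ m) → Fin s → ℝ) (hP : ∀ i j, P i j ∈ Set.Ico (0 : ℝ) 1)
    (k : Fin s → ℕ) (hk : ∑ j, k j ≤ m) :
    kEquidistributed b m P k ↔
      CB b P k = (b : ℝ) ^ (∑ j, k j) * ((b : ℝ) ^ (m - ∑ j, k j) - 1) / ((b : ℝ) ^ m - 1) := by
  classical
  have hb0 : 0 < b := by omega
  set σ := ∑ j, k j with hσ
  set c : Fin (b^m) → (Fin s → ℤ) := fun i r => ⌊(b:ℝ)^(k r) * P i r⌋ with hc
  set V : Finset (Fin s → ℤ) :=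
    Fintype.piFinset (fun r => Finset.Ico (0:ℤ) ((b:ℤ)^(k r))) with hV
  have hmap : ∀ i : Fin (b^m), c i ∈ V := by
    intro i
    rw [hV, Fintype.mem_piFinset]
    intro r
    rw [Finset.mem_Ico]
    constructor
    · exact Int.floor_nonneg.2 (mul_nonneg (by positivity) (hP i r).1)
    · rw [Int.floor_lt]
      push_cast
      nlinarith [(hP i r).2, (hP i r).1, (by positivity : (0:ℝ) < (b:ℝ)^(k r))]
  set NN : (Fin s → ℤ) → ℕ :=
    fun v => (Finset.univ.filter fun i : Fin (b^m) => c i = v).card with hNN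
  have hVcard : V.card = b ^ σ := by
    rw [hV, Fintype.card_piFinset]
    have hcard : ∀ r : Fin s, (Finset.Ico (0:ℤ) ((b:ℤ)^(k r))).card = b ^ (k r) := by
      intro r
      rw [Int.card_Ico]
      have hpc : ((b:ℤ)^(k r)) - 0 = ((b^(k r) : ℕ) : ℤ) := by push_cast; ring
      rw [hpc, Int.toNat_natCast]
    rw [Finset.prod_congr rfl (fun r _ => hcard r), Finset.prod_pow_eq_pow_sum]
  have hsumN : ∑ v ∈ V, NN v = b ^ m := by
    have := Finset.card_eq_sum_card_fiberwise (f := c) (s := Finset.univ) (t := V)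
      (fun i _ => hmap i)
    simpa using this.symm
  -- mB characterization
  have hmB : ∀ l, mB b P k l + 1 = NN (c l) := by
    intro l
    have hfilter : (Finset.univ.filter fun j : Fin (b^m) =>
        j ≠ l ∧ ∀ r : Fin s, (k r : ℕ∞) ≤ gammaB b (P l r) (P j r))
        = (Finset.univ.filter fun j => c j = c l).erase l := by
      ext j
      simp only [Finset.mem_erase, Finset.mem_filter, Finset.mem_univ, true_and]
      constructor
      · rintro ⟨hj, h2⟩
        refine ⟨hj, funext fun r => ?_⟩
        exact ((gamma_le_iff hb (hP l r) (hP j r) (k r)).1 (h2 r)).symm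
      · rintro ⟨hj, h2⟩
        exact ⟨hj, fun r => (gamma_le_iff hb (hP l r) (hP j r) (k r)).2
          (congrFun h2 r).symm⟩
    rw [mB, hfilter]
    have hl : l ∈ Finset.univ.filter fun j : Fin (b^m) => c j = c l := by simp
    rw [Finset.card_erase_of_mem hl]
    have hpos : 0 < (Finset.univ.filter fun j : Fin (b^m) => c j = c l).card :=
      Finset.card_pos.2 ⟨l, hl⟩
    have : NN (c l) = (Finset.univ.filter fun j : Fin (b^m) => c j = c l).card := rfl
    omega
  have hMB : MB b P k + b ^ m = ∑ v ∈ V, (NN v)^2 := by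
    have h1 : MB b P k + b ^ m = ∑ l : Fin (b^m), NN (c l) := by
      calc MB b P k + b^m = ∑ l : Fin (b^m), (mB b P k l + 1) := by
            rw [Finset.sum_add_distrib, Finset.sum_const, Finset.card_univ,
              Fintype.card_fin, smul_eq_mul, mul_one, MB]
        _ = ∑ l : Fin (b^m), NN (c l) := Finset.sum_congr rfl (fun l _ => hmB l)
    rw [h1, ← Finset.sum_fiberwise_of_maps_to (fun i _ => hmap i) (fun l => NN (c l))]
    refine Finset.sum_congr rfl fun v hv => ?_
    have hcong : ∀ l ∈ Finset.univ.filter (fun i : Fin (b^m) => c i = v),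
        NN (c l) = NN v := fun l hl => by rw [(Finset.mem_filter.1 hl).2]
    rw [Finset.sum_congr rfl hcong, Finset.sum_const, smul_eq_mul, sq]
  -- equidistribution ↔ fibers constant
  have hfiber : ∀ a : Fin s → ℕ,
      (Finset.univ.filter fun i : Fin (b^m) => P i ∈ ElemInterval b s k a)
        = (Finset.univ.filter fun i : Fin (b^m) => c i = fun r => (a r : ℤ)) := by
    intro a
    apply Finset.filter_congr
    intro i _
    rw [mem_elem_iff hb]
    constructor
    · intro hr; funext r; exact hr r
    · intro hcv r; exact congrFun hcv r
  have hEquiv : kEquidistributed b m P k ↔ ∀ v ∈ V, NN v = b ^ (m - σ) := by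
    constructor
    · intro h v hv
      rw [hV, Fintype.mem_piFinset] at hv
      set a : Fin s → ℕ := fun r => (v r).toNat with ha
      have hva : (fun r => (a r : ℤ)) = v :=
        funext fun r => Int.toNat_of_nonneg ((Finset.mem_Ico.1 (hv r)).1)
      have halt : ∀ r, a r < b ^ (k r) := by
        intro r
        have h2 : (a r : ℤ) < ((b^(k r) : ℕ) : ℤ) := by
          rw [congrFun hva r]; push_cast; exact (Finset.mem_Ico.1 (hv r)).2
        exact_mod_cast h2
      rw [← h a halt, hfiber a, hva]
    · intro h a ha
      have hv : (fun r => (a r : ℤ)) ∈ V := by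
        rw [hV, Fintype.mem_piFinset]
        intro r
        rw [Finset.mem_Ico]
        constructor
        · positivity
        · exact_mod_cast ha r
      rw [hfiber a]
      exact h _ hv
  -- numeric part
  set q := b ^ (m - σ) with hq
  have hKq : b ^ σ * q = b ^ m := by rw [hq, ← pow_add]; congr 1; omega
  have hq1 : 1 ≤ q := Nat.one_le_pow _ _ hb0
  have hbm1 : 1 ≤ b ^ m := Nat.one_le_pow _ _ hb0
  have hbR : (1:ℝ) < (b:ℝ) := by exact_mod_cast (by omega : 1 < b)
  have hnR : (1:ℝ) < (b:ℝ)^m := one_lt_pow₀ hbR (by omega)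
  have hnne : ((b^m : ℕ):ℝ) = (b:ℝ)^m := by push_cast; ring
  have hqR : ((q:ℕ):ℝ) = (b:ℝ)^(m-σ) := by rw [hq]; push_cast; ring
  have hRHSiff : (CB b P k = (b : ℝ)^σ * ((b : ℝ)^(m - σ) - 1) / ((b : ℝ)^m - 1))
      ↔ (MB b P k : ℝ) = (b:ℝ)^m * ((b:ℝ)^(m-σ) - 1) := by
    rw [CB, hnne]
    have hd1 : (b:ℝ)^m * ((b:ℝ)^m - 1) ≠ 0 := by
      apply mul_ne_zero <;> [positivity; linarith]
    have hd2 : ((b:ℝ)^m - 1) ≠ 0 := by linarith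
    rw [div_eq_div_iff hd1 hd2]
    constructor
    · intro h
      have hbσ : (0:ℝ) < (b:ℝ)^σ * ((b:ℝ)^m - 1) := by
        apply mul_pos
        · positivity
        · linarith
      have h' : ((b:ℝ)^σ * ((b:ℝ)^m - 1)) * (MB b P k : ℝ)
          = ((b:ℝ)^σ * ((b:ℝ)^m - 1)) * ((b:ℝ)^m * ((b:ℝ)^(m-σ) - 1)) := by
        linear_combination h
      exact mul_left_cancel₀ (ne_of_gt hbσ) h'
    · intro h; rw [h]; ring
  constructor
  · intro hEq
    have hfib := hEquiv.1 hEq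
    have hsum2 : ∑ v ∈ V, (NN v)^2 = b^σ * q^2 := by
      rw [Finset.sum_congr rfl (fun v hv => by rw [hfib v hv]), Finset.sum_const,
        smul_eq_mul, hVcard]
    have hMBval : MB b P k = b^m * (q - 1) := by
      have h1 : MB b P k + b^m = b^m * q := by
        rw [hMB, hsum2, sq, ← mul_assoc, hKq]
      have h2 : b^m * (q - 1) = b^m * q - b^m := by
        rw [Nat.mul_sub, mul_one]
      have h3 : b^m ≤ b^m * q := Nat.le_mul_of_pos_right _ (by omega)
      omega
    rw [hRHSiff, hMBval]
    push_cast [Nat.cast_sub hq1, hqR]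
    all_goals ring
  · intro hC
    have hMreal := hRHSiff.1 hC
    have hMBval : MB b P k = b^m * (q - 1) := by
      have hcast : ((b^m * (q-1) : ℕ) : ℝ) = (b:ℝ)^m * ((b:ℝ)^(m-σ) - 1) := by
        push_cast [Nat.cast_sub hq1, hqR]
        all_goals ring
      exact_mod_cast hMreal.trans hcast.symm
    have hsum2 : ∑ v ∈ V, (NN v)^2 = b^m * q := by
      rw [← hMB, hMBval]
      have h2 : b^m * (q - 1) = b^m * q - b^m := by rw [Nat.mul_sub, mul_one]
      have h3 : b^m ≤ b^m * q := Nat.le_mul_of_pos_right _ (by omega)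
      omega
    have hzero : ∑ v ∈ V, ((NN v : ℤ) - (q:ℤ))^2 = 0 := by
      have e1 : ∑ v ∈ V, ((NN v : ℤ) - (q:ℤ))^2
          = (∑ v ∈ V, (NN v:ℤ)^2) - 2*(q:ℤ)*(∑ v ∈ V, (NN v:ℤ)) + (V.card : ℤ) * (q:ℤ)^2 := by
        calc ∑ v ∈ V, ((NN v : ℤ) - (q:ℤ))^2
            = ∑ v ∈ V, ((NN v:ℤ)^2 - 2*(q:ℤ)*(NN v:ℤ) + (q:ℤ)^2) := by
              refine Finset.sum_congr rfl fun v _ => by ring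
          _ = (∑ v ∈ V, (NN v:ℤ)^2) - 2*(q:ℤ)*(∑ v ∈ V, (NN v:ℤ))
              + (V.card : ℤ) * (q:ℤ)^2 := by
              rw [Finset.sum_add_distrib, Finset.sum_sub_distrib, ← Finset.mul_sum,
                Finset.sum_const, nsmul_eq_mul]
      have c1 : ∑ v ∈ V, ((NN v:ℤ)^2) = ((b^m : ℕ) : ℤ) * (q:ℤ) := by
        exact_mod_cast congrArg (Nat.cast : ℕ → ℤ) hsum2
      have c2 : ∑ v ∈ V, (NN v : ℤ) = ((b^m : ℕ) : ℤ) := by exact_mod_cast hsumN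
      have c3 : ((b:ℤ)^σ) * (q:ℤ) = ((b^m : ℕ) : ℤ) := by exact_mod_cast hKq
      rw [e1, c1, c2, hVcard]
      push_cast at c3 ⊢
      nlinarith [c3]
    refine (hEquiv.2 ?_)
    intro v hv
    have h0 := (Finset.sum_eq_zero_iff_of_nonneg (fun v _ => sq_nonneg _)).1 hzero v hv
    have h1 : (NN v : ℤ) - (q:ℤ) = 0 := by
      exact pow_eq_zero_iff (n := 2) (by omega) |>.1 h0
    have : (NN v : ℤ) = (q : ℤ) := by linarith
    exact_mod_cast this
end

section
/- Fix an integer b ≥ 2 and s ≥ 1. For all x, y ∈ [0,1]^s and all i, k ∈ ℕ^s: if k_j ≤ i_j for all j = 1,…,s, then b^{2|k|}·V^s_i(b^{−k}x, b^{−k}y) = V^s_{i−k}(x,y); and if k_j > i_j for some j, then V^s_i(b^{−k}x, b^{−k}y) = 0. Here b^{−k}x = (b^{−k_1}x_1,…,b^{−k_s}x_s) and |k| = k_1 + … + k_s. -/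
open MeasureTheory
open scoped Classical

lemma gset_nonempty (b : ℕ) (hb : 2 ≤ b) {u v : ℝ} (hu : u ∈ Set.Ico (0:ℝ) 1)
    (hv : v ∈ Set.Ico (0:ℝ) 1) (huv : u ≠ v) :
    {i : ℕ | ⌊(b : ℝ) ^ i * u⌋ = ⌊(b : ℝ) ^ i * v⌋ ∧
      ⌊(b : ℝ) ^ (i + 1) * u⌋ ≠ ⌊(b : ℝ) ^ (i + 1) * v⌋}.Nonempty := by
  have hb1 : (1:ℝ) < (b:ℝ) := by exact_mod_cast hb.trans_lt' one_lt_two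
  have hP : ∃ n : ℕ, ⌊(b : ℝ) ^ n * u⌋ ≠ ⌊(b : ℝ) ^ n * v⌋ := by
    have habs : 0 < |u - v| := abs_pos.mpr (sub_ne_zero.mpr huv)
    obtain ⟨n, hn⟩ := pow_unbounded_of_one_lt (1/|u - v|) hb1
    refine ⟨n, fun h => ?_⟩
    have h1 := Int.abs_sub_lt_one_of_floor_eq_floor h
    have h2 : (b:ℝ)^n * u - (b:ℝ)^n * v = (b:ℝ)^n * (u - v) := by ring
    rw [h2, abs_mul, abs_of_pos (by positivity)] at h1
    rw [div_lt_iff₀ habs] at hn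
    nlinarith
  classical
  set N := Nat.find hP with hN
  have hNs : ⌊(b : ℝ) ^ N * u⌋ ≠ ⌊(b : ℝ) ^ N * v⌋ := Nat.find_spec hP
  have hN0 : N ≠ 0 := by
    intro h
    apply hNs
    rw [h, pow_zero, one_mul, one_mul, Int.floor_eq_zero_iff.mpr hu,
      Int.floor_eq_zero_iff.mpr hv]
  obtain ⟨M, hM⟩ := Nat.exists_eq_succ_of_ne_zero hN0
  refine ⟨M, ?_, ?_⟩
  · by_contra h
    have h2 : N ≤ M := Nat.find_le h
    omega
  · rw [← Nat.succ_eq_add_one, ← hM]; exact hNs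

lemma floor_scale_zero (b : ℕ) (hb : 2 ≤ b) {u : ℝ} (hu : u ∈ Set.Ico (0:ℝ) 1)
    {m kk : ℕ} (hm : m ≤ kk) : ⌊(b : ℝ) ^ m * (u / (b : ℝ) ^ kk)⌋ = 0 := by
  have hb1 : (1:ℝ) ≤ (b:ℝ) := by exact_mod_cast hb.trans' one_le_two
  have hbp : (0:ℝ) < (b:ℝ) := by linarith
  refine Int.floor_eq_zero_iff.mpr ⟨mul_nonneg (by positivity) (div_nonneg hu.1 (by positivity)), ?_⟩
  rw [mul_div_assoc', div_lt_one (by positivity)]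
  calc (b:ℝ)^m * u < (b:ℝ)^m * 1 := by
        exact mul_lt_mul_of_pos_left hu.2 (by positivity)
    _ ≤ (b:ℝ)^kk := by rw [mul_one]; exact pow_le_pow_right₀ hb1 hm

lemma gamma_scale (b : ℕ) (hb : 2 ≤ b) (kk : ℕ) {u v : ℝ} (hu : u ∈ Set.Ico (0:ℝ) 1)
    (hv : v ∈ Set.Ico (0:ℝ) 1) :
    gammaB b (u / (b : ℝ) ^ kk) (v / (b : ℝ) ^ kk) = (kk : ℕ∞) + gammaB b u v := by
  have hb1 : (1:ℝ) ≤ (b:ℝ) := by exact_mod_cast hb.trans' one_le_two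
  have hbne : ((b:ℝ) ^ kk) ≠ 0 := by positivity
  by_cases huv : u = v
  · rw [huv, gammaB, gammaB, if_pos rfl, if_pos rfl]; rfl
  · have huv' : u / (b : ℝ) ^ kk ≠ v / (b : ℝ) ^ kk := fun h =>
      huv (by field_simp at h; exact h)
    rw [gammaB, gammaB, if_neg huv', if_neg huv]
    set S := {i : ℕ | ⌊(b : ℝ) ^ i * u⌋ = ⌊(b : ℝ) ^ i * v⌋ ∧
      ⌊(b : ℝ) ^ (i + 1) * u⌋ ≠ ⌊(b : ℝ) ^ (i + 1) * v⌋} with hS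
    set S' := {i : ℕ | ⌊(b : ℝ) ^ i * (u / (b : ℝ) ^ kk)⌋ = ⌊(b : ℝ) ^ i * (v / (b : ℝ) ^ kk)⌋ ∧
      ⌊(b : ℝ) ^ (i + 1) * (u / (b : ℝ) ^ kk)⌋ ≠ ⌊(b : ℝ) ^ (i + 1) * (v / (b : ℝ) ^ kk)⌋} with hS'
    have key : ∀ n, n ∈ S' ↔ kk ≤ n ∧ n - kk ∈ S := by
      intro n
      rcases le_or_gt kk n with hkn | hkn
      · have e1 : ∀ w : ℝ, (b:ℝ)^n * (w / (b:ℝ)^kk) = (b:ℝ)^(n-kk) * w := by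
          intro w
          have : (b:ℝ)^n = (b:ℝ)^(n-kk) * (b:ℝ)^kk := by
            rw [← pow_add, Nat.sub_add_cancel hkn]
          rw [this]; field_simp
        have e2 : ∀ w : ℝ, (b:ℝ)^(n+1) * (w / (b:ℝ)^kk) = (b:ℝ)^((n-kk)+1) * w := by
          intro w
          have : (b:ℝ)^(n+1) = (b:ℝ)^((n-kk)+1) * (b:ℝ)^kk := by
            rw [← pow_add]; congr 1; omega
          rw [this]; field_simp
        simp only [hS, hS', Set.mem_setOf_eq, e1, e2]
        tauto
      · constructor
        · rintro ⟨-, h2⟩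
          exact absurd (floor_scale_zero b hb hv (by omega : n+1 ≤ kk) ▸
            floor_scale_zero b hb hu (by omega : n+1 ≤ kk)) h2
        · rintro ⟨h, -⟩; omega
    have hne : S.Nonempty := gset_nonempty b hb hu hv huv
    have hm := Nat.sInf_mem hne
    have hmem' : kk + sInf S ∈ S' := (key _).mpr ⟨by omega, by
      simpa using hm⟩
    have h1 : sInf S' ≤ kk + sInf S := Nat.sInf_le hmem'
    have h2 : kk + sInf S ≤ sInf S' := by
      have hmem := Nat.sInf_mem ⟨kk + sInf S, hmem'⟩
      obtain ⟨ha, hb'⟩ := (key _).mp hmem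
      have := Nat.sInf_le hb'
      omega
    have : sInf S' = kk + sInf S := le_antisymm h1 h2
    rw [this]
    push_cast
    rfl

lemma gamma_scale_inv (b : ℕ) (hb : 2 ≤ b) (kk : ℕ) {u v : ℝ} (hu : u ∈ Set.Ico (0:ℝ) 1)
    (hv : v ∈ Set.Ico (0:ℝ) 1) {ii : ℕ}
    (h : gammaB b (u / (b : ℝ) ^ kk) (v / (b : ℝ) ^ kk) = (ii : ℕ∞)) :
    kk ≤ ii ∧ gammaB b u v = ((ii - kk : ℕ) : ℕ∞) := by
  rw [gamma_scale b hb kk hu hv] at h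
  cases hg : gammaB b u v with
  | top => rw [hg] at h; simp at h
  | coe m =>
    rw [hg] at h
    have h2 : ((kk + m : ℕ) : ℕ∞) = (ii : ℕ∞) := by push_cast; exact h
    have h3 : kk + m = ii := Nat.cast_inj.mp h2
    exact ⟨by omega, by exact_mod_cast (show m = ii - kk by omega)⟩

lemma det_prodMap' (s : ℕ) (f g : (Fin s → ℝ) →ₗ[ℝ] (Fin s → ℝ)) :
    LinearMap.det (f.prodMap g) = f.det * g.det := by
  let bas := Pi.basisFun ℝ (Fin s)
  rw [← LinearMap.det_toMatrix (bas.prod bas), LinearMap.toMatrix_prodMap,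
    Matrix.det_fromBlocks_zero₁₂, LinearMap.det_toMatrix, LinearMap.det_toMatrix]

def DsetS (b s : ℕ) (i : Fin s → ℕ) : Set ((Fin s → ℝ) × (Fin s → ℝ)) :=
  {p | (∀ j, p.1 j ∈ Set.Ico (0 : ℝ) 1) ∧ (∀ j, p.2 j ∈ Set.Ico (0 : ℝ) 1) ∧
    ∀ j, gammaB b (p.1 j) (p.2 j) = (i j : ℕ∞)}

def Rset (s : ℕ) (x y : Fin s → ℝ) : Set ((Fin s → ℝ) × (Fin s → ℝ)) :=
  (Set.univ.pi fun j => Set.Ico 0 (x j)) ×ˢ (Set.univ.pi fun j => Set.Ico 0 (y j))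

noncomputable def ViS (b s : ℕ) (i : Fin s → ℕ) (x y : Fin s → ℝ) : ℝ :=
  (volume (Rset s x y ∩ DsetS b s i)).toReal

theorem stmt13 (b s : ℕ) (hb : 2 ≤ b) (hs : 1 ≤ s) (x y : Fin s → ℝ)
    (hx : ∀ j, x j ∈ Set.Icc (0 : ℝ) 1) (hy : ∀ j, y j ∈ Set.Icc (0 : ℝ) 1)
    (i k : Fin s → ℕ) :
    ((∀ j, k j ≤ i j) →
      (b : ℝ) ^ (2 * ∑ j, k j) *
          ViS b s i (fun j => x j / (b : ℝ) ^ k j) (fun j => y j / (b : ℝ) ^ k j) =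
        ViS b s (fun j => i j - k j) x y) ∧
    ((∃ j, i j < k j) →
      ViS b s i (fun j => x j / (b : ℝ) ^ k j) (fun j => y j / (b : ℝ) ^ k j) = 0) := by
  have hb1 : (1:ℝ) ≤ (b:ℝ) := by exact_mod_cast hb.trans' one_le_two
  have hbp : ∀ m : ℕ, (0:ℝ) < (b:ℝ) ^ m := fun m => by positivity
  constructor
  · intro hk
    set c : Fin s → ℝ := fun j => ((b:ℝ) ^ (k j))⁻¹ with hc
    set D : (Fin s → ℝ) →ₗ[ℝ] (Fin s → ℝ) := Matrix.toLin' (Matrix.diagonal c) with hD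
    set T := D.prodMap D with hT
    have hDapp : ∀ w : Fin s → ℝ, D w = fun j => w j / (b:ℝ) ^ (k j) := by
      intro w; ext j
      simp [hD, Matrix.toLin'_apply, Matrix.mulVec_diagonal, hc, div_eq_mul_inv, mul_comm]
    have hTapp : ∀ p : (Fin s → ℝ) × (Fin s → ℝ),
        T p = (fun j => p.1 j / (b:ℝ) ^ (k j), fun j => p.2 j / (b:ℝ) ^ (k j)) := by
      intro p
      rw [hT, LinearMap.prodMap_apply, hDapp, hDapp]
    have hsets : Rset s (fun j => x j / (b:ℝ) ^ k j) (fun j => y j / (b:ℝ) ^ k j) ∩ DsetS b s i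
        = T '' (Rset s x y ∩ DsetS b s (fun j => i j - k j)) := by
      ext ⟨u, v⟩
      simp only [Rset, DsetS, Set.mem_inter_iff, Set.mem_prod, Set.mem_univ_pi,
        Set.mem_setOf_eq, Set.mem_image, Prod.exists]
      constructor
      · rintro ⟨⟨hu, hv⟩, hu1, hv1, hg⟩
        refine ⟨fun j => u j * (b:ℝ) ^ (k j), fun j => v j * (b:ℝ) ^ (k j),
          ⟨⟨⟨fun j => ?_, fun j => ?_⟩, fun j => ?_, fun j => ?_, fun j => ?_⟩, ?_⟩⟩
        · exact ⟨mul_nonneg (hu1 j).1 (hbp _).le, (lt_div_iff₀ (hbp _)).mp (hu j).2⟩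
        · exact ⟨mul_nonneg (hv1 j).1 (hbp _).le, (lt_div_iff₀ (hbp _)).mp (hv j).2⟩
        · exact ⟨mul_nonneg (hu1 j).1 (hbp _).le,
            lt_of_lt_of_le ((lt_div_iff₀ (hbp _)).mp (hu j).2) (hx j).2⟩
        · exact ⟨mul_nonneg (hv1 j).1 (hbp _).le,
            lt_of_lt_of_le ((lt_div_iff₀ (hbp _)).mp (hv j).2) (hy j).2⟩
        · have hu' : u j * (b:ℝ) ^ (k j) ∈ Set.Ico (0:ℝ) 1 :=
            ⟨mul_nonneg (hu1 j).1 (hbp _).le,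
             lt_of_lt_of_le ((lt_div_iff₀ (hbp _)).mp (hu j).2) (hx j).2⟩
          have hv' : v j * (b:ℝ) ^ (k j) ∈ Set.Ico (0:ℝ) 1 :=
            ⟨mul_nonneg (hv1 j).1 (hbp _).le,
             lt_of_lt_of_le ((lt_div_iff₀ (hbp _)).mp (hv j).2) (hy j).2⟩
          have heq : gammaB b (u j * (b:ℝ) ^ (k j) / (b:ℝ) ^ (k j))
              (v j * (b:ℝ) ^ (k j) / (b:ℝ) ^ (k j)) = (i j : ℕ∞) := by
            rw [mul_div_cancel_right₀ _ (hbp (k j)).ne',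
              mul_div_cancel_right₀ _ (hbp (k j)).ne']
            exact hg j
          exact (gamma_scale_inv b hb (k j) hu' hv' heq).2
        · rw [hTapp]
          refine Prod.ext ?_ ?_ <;> funext j <;>
            exact mul_div_cancel_right₀ _ (hbp (k j)).ne'
      · rintro ⟨u₀, v₀, ⟨⟨⟨hu, hv⟩, hu1, hv1, hg⟩, hTe⟩⟩
        rw [hTapp] at hTe
        have hTu : u = fun j => u₀ j / (b:ℝ) ^ (k j) := (congrArg Prod.fst hTe).symm
        have hTv : v = fun j => v₀ j / (b:ℝ) ^ (k j) := (congrArg Prod.snd hTe).symm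
        subst hTu hTv
        simp only
        refine ⟨⟨fun j => ?_, fun j => ?_⟩, fun j => ?_, fun j => ?_, fun j => ?_⟩
        · exact ⟨div_nonneg (hu1 j).1 (hbp _).le,
            div_lt_div_of_pos_right (hu j).2 (hbp _)⟩
        · exact ⟨div_nonneg (hv1 j).1 (hbp _).le,
            div_lt_div_of_pos_right (hv j).2 (hbp _)⟩
        · exact ⟨div_nonneg (hu1 j).1 (hbp _).le,
            lt_of_le_of_lt (div_le_self (hu1 j).1 (one_le_pow₀ hb1)) (hu1 j).2⟩
        · exact ⟨div_nonneg (hv1 j).1 (hbp _).le,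
            lt_of_le_of_lt (div_le_self (hv1 j).1 (one_le_pow₀ hb1)) (hv1 j).2⟩
        · rw [gamma_scale b hb (k j) (hu1 j) (hv1 j), hg j]
          rw [← Nat.cast_add]
          exact congrArg _ (show k j + (i j - k j) = i j by have := hk j; omega)
    haveI : (volume : Measure ((Fin s → ℝ) × (Fin s → ℝ))).IsAddHaarMeasure :=
      Measure.prod.instIsAddHaarMeasure volume volume
    have hdet : LinearMap.det T = (∏ j, c j) * (∏ j, c j) := by
      rw [hT, det_prodMap' s D D, hD, LinearMap.det_toLin', Matrix.det_diagonal]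
    have hprod : ∏ j, c j = ((b:ℝ) ^ (∑ j, k j))⁻¹ := by
      rw [hc, Finset.prod_inv_distrib, Finset.prod_pow_eq_pow_sum]
    have hPne : ((b:ℝ) ^ (∑ j, k j)) ≠ 0 := (hbp _).ne'
    simp only [ViS]
    rw [hsets, Measure.addHaar_image_linearMap volume T, ENNReal.toReal_mul,
      ENNReal.toReal_ofReal (abs_nonneg _), hdet, hprod,
      abs_of_pos (by positivity : (0:ℝ) < ((b:ℝ) ^ (∑ j, k j))⁻¹ * ((b:ℝ) ^ (∑ j, k j))⁻¹)]
    rw [two_mul, pow_add]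
    field_simp
  · intro ⟨j0, hj0⟩
    have hempty : Rset s (fun j => x j / (b:ℝ) ^ k j) (fun j => y j / (b:ℝ) ^ k j)
        ∩ DsetS b s i = ∅ := by
      rw [Set.eq_empty_iff_forall_notMem]
      rintro ⟨u, v⟩ hmem
      simp only [Rset, DsetS, Set.mem_inter_iff, Set.mem_prod, Set.mem_univ_pi,
        Set.mem_setOf_eq] at hmem
      obtain ⟨⟨hu, hv⟩, hu1, hv1, hg⟩ := hmem
      have hu' : u j0 * (b:ℝ) ^ (k j0) ∈ Set.Ico (0:ℝ) 1 :=
        ⟨mul_nonneg (hu1 j0).1 (hbp _).le,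
         lt_of_lt_of_le ((lt_div_iff₀ (hbp _)).mp (hu j0).2) (hx j0).2⟩
      have hv' : v j0 * (b:ℝ) ^ (k j0) ∈ Set.Ico (0:ℝ) 1 :=
        ⟨mul_nonneg (hv1 j0).1 (hbp _).le,
         lt_of_lt_of_le ((lt_div_iff₀ (hbp _)).mp (hv j0).2) (hy j0).2⟩
      have heq : gammaB b (u j0 * (b:ℝ) ^ (k j0) / (b:ℝ) ^ (k j0))
          (v j0 * (b:ℝ) ^ (k j0) / (b:ℝ) ^ (k j0)) = (i j0 : ℕ∞) := by
        rw [mul_div_cancel_right₀ _ (hbp (k j0)).ne',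
          mul_div_cancel_right₀ _ (hbp (k j0)).ne']
        exact hg j0
      have := (gamma_scale_inv b hb (k j0) hu' hv' heq).1
      omega
    simp only [ViS]
    rw [hempty]
    simp
end
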